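/- arXiv:math/0510021 — 6 statements merged into one kernel-verified Lean document; each statement's English description precedes it below -/
import Mathlib

section
/- Let φ : ℝ → ℝ be a smooth nonincreasing function with 0 ≤ φ ≤ 1, φ(t) = 1 for t ≤ 0, φ(t) = 0 for t ≥ 1, and |φ'(t)| + |φ''(t)| < 10 for all t. For ε > 0 define φ_ε on the punctured unit disk {z ∈ ℂ : 0 < |z| < 1} by φ_ε(z) = φ( ((log(1/|z|))⁻¹ − ε)/ε ). Then for every z with 0 < |z| < 1, the Wirtinger derivative satisfies |∂_z φ_ε(z)| ≤ 10 / ( |z| · log(1/|z|) ). -/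
/-- The Wirtinger derivative `∂_z f = (∂f/∂x − i ∂f/∂y)/2` of a function `f : ℂ → ℂ`,
computed via the real Fréchet derivative. -/
noncomputable def wD (f : ℂ → ℂ) (z : ℂ) : ℂ :=
  (fderiv ℝ f z 1 - Complex.I * fderiv ℝ f z Complex.I) / 2

set_option maxHeartbeats 1000000 in
theorem stmt_0 (φ : ℝ → ℝ) (hφsmooth : ContDiff ℝ (⊤ : ℕ∞) φ) (hφanti : Antitone φ)
    (hφ0 : ∀ t : ℝ, 0 ≤ φ t) (hφ1 : ∀ t : ℝ, φ t ≤ 1)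
    (hφle : ∀ t : ℝ, t ≤ 0 → φ t = 1) (hφge : ∀ t : ℝ, 1 ≤ t → φ t = 0)
    (hφbound : ∀ t : ℝ, |deriv φ t| + |deriv (deriv φ) t| < 10)
    (ε : ℝ) (hε : 0 < ε) (z : ℂ) (hz0 : 0 < ‖z‖) (hz1 : ‖z‖ < 1) :
    ‖(wD (fun w : ℂ =>
        ((φ (((Real.log (1 / ‖w‖))⁻¹ - ε) / ε) : ℝ) : ℂ)) z)‖
      ≤ 10 / (‖z‖ * Real.log (1 / ‖z‖)) := by
  set r := ‖z‖ with hrdef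
  set L : ℝ := Real.log (1 / r) with hLdef
  have hLpos : 0 < L := Real.log_pos ((one_lt_div hz0).mpr hz1)
  have hz : z ≠ 0 := norm_ne_zero_iff.mp hz0.ne'
  have hns0 : Complex.normSq z ≠ 0 := by
    simpa [Complex.normSq_eq_zero] using hz
  set t : ℝ := Real.log (Complex.normSq z) with htdef
  have htL : -t / 2 = L := by
    rw [htdef, hLdef, ← Complex.sq_norm, Real.log_pow, one_div, Real.log_inv]
    push_cast; ring
  set q : ℝ → ℝ := fun s => ((-s / 2)⁻¹ - ε) / ε with hqdef
  set g : ℝ := (L⁻¹ - ε) / ε with hgdef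
  have hqt : q t = g := by
    show ((-t / 2)⁻¹ - ε) / ε = g
    rw [htL]
  -- rewrite the function
  have hfun : (fun w : ℂ => ((φ (((Real.log (1 / ‖w‖))⁻¹ - ε) / ε) : ℝ) : ℂ))
      = fun w : ℂ => ((φ (q (Real.log (Complex.normSq w))) : ℝ) : ℂ) := by
    funext w
    have : Real.log (1 / ‖w‖) = -(Real.log (Complex.normSq w)) / 2 := by
      rw [← Complex.sq_norm, Real.log_pow, one_div, Real.log_inv]; push_cast; ring
    simp only [hqdef, this]
  -- derivative of normSq
  have hre : HasFDerivAt (fun w : ℂ => w.re) (Complex.reCLM : ℂ →L[ℝ] ℝ) z :=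
    Complex.reCLM.hasFDerivAt
  have him : HasFDerivAt (fun w : ℂ => w.im) (Complex.imCLM : ℂ →L[ℝ] ℝ) z :=
    Complex.imCLM.hasFDerivAt
  set Dn : ℂ →L[ℝ] ℝ := z.re • Complex.reCLM + z.re • Complex.reCLM
      + (z.im • Complex.imCLM + z.im • Complex.imCLM) with hDndef
  have hns : HasFDerivAt Complex.normSq Dn z := by
    have h := (hre.mul hre).add (him.mul him)
    refine h.congr_of_eventuallyEq (Filter.Eventually.of_forall fun w => ?_)
    simp [Complex.normSq_apply]
  -- log ∘ normSq
  have hlog : HasDerivAt Real.log (Complex.normSq z)⁻¹ (Complex.normSq z) :=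
    Real.hasDerivAt_log hns0
  have hlns : HasFDerivAt (fun w : ℂ => Real.log (Complex.normSq w))
      ((Complex.normSq z)⁻¹ • Dn) z := hlog.comp_hasFDerivAt z hns
  -- derivative of q
  have hLne : -t / 2 ≠ 0 := by rw [htL]; exact hLpos.ne'
  have hq1 : HasDerivAt (fun s : ℝ => -s / 2) (-1 / 2) t := by
    simpa using ((hasDerivAt_id t).neg.div_const 2)
  have hq2 : HasDerivAt (fun s : ℝ => (-s / 2)⁻¹) (-(-1 / 2) / (-t / 2) ^ 2) t :=
    hq1.inv hLne
  have hq : HasDerivAt q (1 / (2 * ε * L ^ 2)) t := by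
    have := (hq2.sub_const ε).div_const ε
    refine this.congr_deriv ?_
    rw [htL]
    field_simp
  -- φ ∘ q
  have hφd : HasDerivAt φ (deriv φ g) g :=
    ((hφsmooth.differentiable (by simp)) g).hasDerivAt
  have hφq : HasDerivAt (fun s => φ (q s)) (deriv φ g * (1 / (2 * ε * L ^ 2))) t := by
    have := (hqt ▸ hφd : HasDerivAt φ (deriv φ g) (q t)).comp t hq
    exact this
  set c : ℝ := deriv φ g * (1 / (2 * ε * L ^ 2)) with hcdef
  have hF : HasFDerivAt (fun w : ℂ => φ (q (Real.log (Complex.normSq w))))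
      (c • ((Complex.normSq z)⁻¹ • Dn)) z := by
    have := hφq.comp_hasFDerivAt z hlns; exact this
  have hf : HasFDerivAt (fun w : ℂ => ((φ (q (Real.log (Complex.normSq w))) : ℝ) : ℂ))
      (Complex.ofRealCLM.comp (c • ((Complex.normSq z)⁻¹ • Dn))) z :=
    Complex.ofRealCLM.hasFDerivAt.comp z hF
  have hfd := hf.fderiv
  -- evaluate
  have hDn1 : Dn 1 = 2 * z.re := by simp [hDndef]; ring
  have hDnI : Dn Complex.I = 2 * z.im := by simp [hDndef]; ring
  have hwd : wD (fun w : ℂ => ((φ (q (Real.log (Complex.normSq w))) : ℝ) : ℂ)) z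
      = ((c * (Complex.normSq z)⁻¹ : ℝ) : ℂ) * ((z.re : ℂ) - Complex.I * (z.im : ℂ)) := by
    rw [wD, hfd]
    simp only [ContinuousLinearMap.coe_comp', Function.comp_apply,
      ContinuousLinearMap.coe_smul', Pi.smul_apply, hDn1, hDnI,
      Complex.ofRealCLM_apply, smul_eq_mul]
    push_cast
    ring
  rw [hfun, hwd]
  -- compute the absolute value
  have habs : ‖(z.re : ℂ) - Complex.I * (z.im : ℂ)‖ = r := by
    have : (z.re : ℂ) - Complex.I * (z.im : ℂ) = (starRingEnd ℂ) z := by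
      rw [Complex.ext_iff]; simp
    rw [this, Complex.norm_conj]
  rw [norm_mul, habs, Complex.norm_real, Real.norm_eq_abs]
  have hns_abs : Complex.normSq z = r ^ 2 := (Complex.sq_norm z).symm
  have hkey : |deriv φ g| ≤ 20 * ε * L := by
    rcases le_or_gt 1 g with hg | hg
    · have : deriv φ g = 0 := by
        have hmin : IsLocalMin φ g := by
          apply Filter.Eventually.of_forall
          intro s
          rw [hφge g hg]; exact hφ0 s
        exact hmin.deriv_eq_zero
      rw [this, abs_zero]; positivity
    · have h2 : L⁻¹ < 2 * ε := by
        have := (div_lt_one hε).mp (hgdef ▸ hg)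
        linarith
      have h3 : 1 < 2 * ε * L := by
        have := (inv_lt_iff_one_lt_mul₀ hLpos).mp h2
        linarith [mul_comm L (2 * ε)]
      have h4 : |deriv φ g| < 10 := by
        have := hφbound g
        have := abs_nonneg (deriv (deriv φ) g)
        linarith
      nlinarith [abs_nonneg (deriv φ g)]
  have hc : |c * (Complex.normSq z)⁻¹| = |deriv φ g| * (1 / (2 * ε * L ^ 2)) * (r ^ 2)⁻¹ := by
    rw [hcdef, hns_abs, abs_mul, abs_mul]
    congr 1
    · congr 1
      rw [abs_of_pos]; positivity
    · rw [abs_of_pos]; positivity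
  rw [hc]
  have hgoal : |deriv φ g| * (1 / (2 * ε * L ^ 2)) * (r ^ 2)⁻¹ * r
      = |deriv φ g| / (2 * ε * L ^ 2 * r) := by
    field_simp
  rw [hgoal, div_le_div_iff₀ (by positivity) (by positivity)]
  nlinarith [mul_le_mul_of_nonneg_right hkey (mul_pos hz0 hLpos).le]
end

section
/- Let φ : ℝ → ℝ be a smooth nonincreasing function with 0 ≤ φ ≤ 1, φ(t) = 1 for t ≤ 0, φ(t) = 0 for t ≥ 1, and |φ'(t)| + |φ''(t)| < 10 for all t. For ε > 0 define φ_ε on the punctured unit disk by φ_ε(z) = φ( ((log(1/|z|))⁻¹ − ε)/ε ). Then for every z with 0 < |z| < 1, |∂_z ∂̄_z φ_ε(z)| ≤ 20 / ( |z|² · (log(1/|z|))² ). In particular the bound is independent of ε. -/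
open Complex Filter Topology Set

/-- The conjugate Wirtinger derivative `∂̄_z f = (∂f/∂x + i ∂f/∂y)/2`. -/
noncomputable def wDbar (f : ℂ → ℂ) (z : ℂ) : ℂ :=
  (fderiv ℝ f z 1 + Complex.I * fderiv ℝ f z Complex.I) / 2

noncomputable def nsd (w : ℂ) : ℂ →L[ℝ] ℝ :=
  (2*w.re) • Complex.reCLM + (2*w.im) • Complex.imCLM

lemma hasFDerivAt_normSq (w : ℂ) : HasFDerivAt Complex.normSq (nsd w) w := by
  have h : (Complex.normSq : ℂ → ℝ) =
      fun y => Complex.reCLM y * Complex.reCLM y + Complex.imCLM y * Complex.imCLM y := by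
    funext y; simp [Complex.normSq_apply]
  rw [h]
  have h1 := (Complex.reCLM.hasFDerivAt (x := w)).mul (Complex.reCLM.hasFDerivAt (x := w))
  have h2 := (Complex.imCLM.hasFDerivAt (x := w)).mul (Complex.imCLM.hasFDerivAt (x := w))
  have := h1.add h2
  refine this.congr_fderiv ?_
  ext v <;> simp [nsd] <;> ring

section
variable (ε : ℝ)

noncomputable def hh (ε : ℝ) : ℝ → ℝ := fun s => ((-Real.log s / 2)⁻¹ - ε) / ε

lemma hasDerivAt_hh (hε : 0 < ε) {s : ℝ} (hs0 : 0 < s) (hs1 : s < 1) :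
    HasDerivAt (hh ε) (2 / (ε * s * (Real.log s)^2)) s := by
  have hlog : Real.log s ≠ 0 := by
    have := Real.log_neg hs0 hs1
    linarith
  have h1 : HasDerivAt (fun u : ℝ => -Real.log u / 2) (-(s⁻¹) / 2) s :=
    ((Real.hasDerivAt_log hs0.ne').neg).div_const 2
  have h2 := h1.inv (by
    simp only [ne_eq, div_eq_zero_iff, neg_eq_zero]
    push_neg
    exact ⟨hlog, by norm_num⟩)
  have h3 := (h2.sub_const ε).div_const ε
  refine h3.congr_deriv ?_
  field_simp

noncomputable def qq (φ : ℝ → ℝ) (ε : ℝ) : ℝ → ℝ :=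
  fun s => deriv φ (hh ε s) * (2 / (ε * s * (Real.log s)^2))

lemma hasDerivAt_phi_hh (φ : ℝ → ℝ) (hφ : Differentiable ℝ φ) (hε : 0 < ε)
    {s : ℝ} (hs0 : 0 < s) (hs1 : s < 1) :
    HasDerivAt (fun u => φ (hh ε u)) (qq φ ε s) s :=
  (hφ _).hasDerivAt.comp s (hasDerivAt_hh ε hε hs0 hs1)

noncomputable def Q1 (φ : ℝ → ℝ) (ε : ℝ) : ℝ → ℝ := fun s =>
  deriv (deriv φ) (hh ε s) * (2 / (ε * s * (Real.log s)^2))^2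
    + deriv φ (hh ε s) * (-(2 * (Real.log s + 2)) / (ε * s^2 * (Real.log s)^3))

lemma hasDerivAt_qq (φ : ℝ → ℝ) (hφ : Differentiable ℝ (deriv φ)) (hε : 0 < ε)
    {s : ℝ} (hs0 : 0 < s) (hs1 : s < 1) :
    HasDerivAt (qq φ ε) (Q1 φ ε s) s := by
  unfold Q1
  have hlog : Real.log s ≠ 0 := by
    have := Real.log_neg hs0 hs1
    linarith
  have h1 : HasDerivAt (fun u => deriv φ (hh ε u))
      (deriv (deriv φ) (hh ε s) * (2 / (ε * s * (Real.log s)^2))) s :=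
    (hφ _).hasDerivAt.comp s (hasDerivAt_hh ε hε hs0 hs1)
  have hd : HasDerivAt (fun u : ℝ => ε * u * (Real.log u)^2)
      ((ε * 1) * (Real.log s)^2 + (ε * s) * ((2 : ℕ) * Real.log s ^ 1 * s⁻¹)) s :=
    ((hasDerivAt_id s).const_mul ε).mul ((Real.hasDerivAt_log hs0.ne').pow 2)
  have hDne : ε * s * (Real.log s)^2 ≠ 0 := by positivity
  have hk := (hasDerivAt_const s (2:ℝ)).div hd hDne
  have := h1.mul hk
  refine this.congr_deriv ?_
  simp only [Pi.div_apply]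
  push_cast
  field_simp
  ring

lemma wDbar_formula (φ : ℝ → ℝ) (hφ : Differentiable ℝ φ) (hε : 0 < ε)
    {w : ℂ} (hw0 : 0 < Complex.normSq w) (hw1 : Complex.normSq w < 1) :
    (fderiv ℝ (fun y : ℂ => ((φ (hh ε (Complex.normSq y)) : ℝ) : ℂ)) w 1
      + Complex.I * fderiv ℝ (fun y : ℂ => ((φ (hh ε (Complex.normSq y)) : ℝ) : ℂ)) w Complex.I) / 2
      = ((qq φ ε (Complex.normSq w) : ℝ) : ℂ) * w := by
  have hF : HasFDerivAt (fun y : ℂ => ((φ (hh ε (Complex.normSq y)) : ℝ) : ℂ))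
      (Complex.ofRealCLM.comp ((qq φ ε (Complex.normSq w)) • nsd w)) w :=
    Complex.ofRealCLM.hasFDerivAt.comp w
      ((hasDerivAt_phi_hh ε φ hφ hε hw0 hw1).comp_hasFDerivAt w (hasFDerivAt_normSq w))
  rw [hF.fderiv]
  set q := qq φ ε (Complex.normSq w)
  simp [nsd]
  rw [← Complex.re_add_im w]
  push_cast
  ring_nf
  simp
  ring

lemma wD_formula (φ : ℝ → ℝ) (hφ : Differentiable ℝ (deriv φ)) (hε : 0 < ε)
    {z : ℂ} (hz0 : 0 < Complex.normSq z) (hz1 : Complex.normSq z < 1) :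
    (fderiv ℝ (fun w : ℂ => ((qq φ ε (Complex.normSq w) : ℝ) : ℂ) * w) z 1
      - Complex.I * fderiv ℝ (fun w : ℂ => ((qq φ ε (Complex.normSq w) : ℝ) : ℂ) * w) z Complex.I) / 2
      = ((qq φ ε (Complex.normSq z) + Complex.normSq z * Q1 φ ε (Complex.normSq z) : ℝ) : ℂ) := by
  have hc : HasFDerivAt (fun w : ℂ => ((qq φ ε (Complex.normSq w) : ℝ) : ℂ))
      (Complex.ofRealCLM.comp ((Q1 φ ε (Complex.normSq z)) • nsd z)) z :=
    Complex.ofRealCLM.hasFDerivAt.comp z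
      ((hasDerivAt_qq ε φ hφ hε hz0 hz1).comp_hasFDerivAt z (hasFDerivAt_normSq z))
  have hP := hc.mul (hasFDerivAt_id z)
  rw [show (fun w : ℂ => ((qq φ ε (Complex.normSq w) : ℝ) : ℂ) * w)
      = (fun w : ℂ => ((qq φ ε (Complex.normSq w) : ℝ) : ℂ)) * id from rfl, hP.fderiv]
  simp [nsd, Complex.ext_iff, Complex.normSq_apply]
  constructor <;> ring

end

theorem stmt_1 (φ : ℝ → ℝ) (hφsmooth : ContDiff ℝ (⊤ : ℕ∞) φ) (hφanti : Antitone φ)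
    (hφ0 : ∀ t : ℝ, 0 ≤ φ t) (hφ1 : ∀ t : ℝ, φ t ≤ 1)
    (hφle : ∀ t : ℝ, t ≤ 0 → φ t = 1) (hφge : ∀ t : ℝ, 1 ≤ t → φ t = 0)
    (hφbound : ∀ t : ℝ, |deriv φ t| + |deriv (deriv φ) t| < 10)
    (ε : ℝ) (hε : 0 < ε) (z : ℂ) (hz0 : 0 < ‖z‖) (hz1 : ‖z‖ < 1) :
    ‖(wD (fun w : ℂ => wDbar (fun y : ℂ =>
        ((φ (((Real.log (1 / ‖y‖))⁻¹ - ε) / ε) : ℝ) : ℂ)) w) z)‖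
      ≤ 20 / (‖z‖ ^ 2 * (Real.log (1 / ‖z‖)) ^ 2) := by
  have hφd : Differentiable ℝ φ := hφsmooth.differentiable (by simp)
  have hphiInf : ContDiff ℝ (⊤ : ℕ∞) φ := hφsmooth.of_le (by simp)
  have hφd2 : Differentiable ℝ (deriv φ) := by
    have := ContDiff.iterate_deriv 1 hphiInf
    simp only [Function.iterate_one] at this
    exact this.differentiable (by simp)
  have hzne : z ≠ 0 := by
    intro h; rw [h] at hz0; simp at hz0
  set s := Complex.normSq z with hsdef
  set ℓ := Real.log (1 / ‖z‖) with hldef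
  have hs0 : 0 < s := Complex.normSq_pos.mpr hzne
  have hsq : ‖z‖ ^ 2 = s := Complex.sq_norm z
  have hs1 : s < 1 := by nlinarith [norm_nonneg z]
  have hl : 0 < ℓ := by
    apply Real.log_pos
    rw [lt_div_iff₀ hz0]; linarith
  have hLs : Real.log s = -(2 * ℓ) := by
    rw [hldef, one_div, Real.log_inv, ← hsq, Real.log_pow]
    push_cast; ring
  have hd1 : ∀ t : ℝ, 1 < t → deriv φ t = 0 := by
    intro t ht
    have hev : φ =ᶠ[nhds t] (fun _ => (0:ℝ)) := by
      filter_upwards [Ioi_mem_nhds ht] with u hu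
      exact hφge u (le_of_lt hu)
    rw [hev.deriv_eq, deriv_const]
  have hd2 : ∀ t : ℝ, 1 < t → deriv (deriv φ) t = 0 := by
    intro t ht
    have hev : deriv φ =ᶠ[nhds t] (fun _ => (0:ℝ)) := by
      filter_upwards [Ioi_mem_nhds ht] with u hu
      exact hd1 u hu
    rw [hev.deriv_eq, deriv_const]
  -- step 1: identify wDbar with the explicit formula near z
  have hGP : ∀ w : ℂ, 0 < Complex.normSq w → Complex.normSq w < 1 →
      wDbar (fun y : ℂ => ((φ (((Real.log (1 / ‖y‖))⁻¹ - ε) / ε) : ℝ) : ℂ)) w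
        = ((qq φ ε (Complex.normSq w) : ℝ) : ℂ) * w := by
    intro w hw0 hw1
    have hwne : w ≠ 0 := by intro h; rw [h] at hw0; simp at hw0
    have hev : (fun y : ℂ => ((φ (((Real.log (1 / ‖y‖))⁻¹ - ε) / ε) : ℝ) : ℂ))
        =ᶠ[nhds w] (fun y : ℂ => ((φ (hh ε (Complex.normSq y)) : ℝ) : ℂ)) := by
      filter_upwards [compl_singleton_mem_nhds hwne] with y hy
      have hyne : y ≠ 0 := hy
      have harg : Real.log (1 / ‖y‖) = -Real.log (Complex.normSq y) / 2 := by
        rw [one_div, Real.log_inv, ← Complex.sq_norm, Real.log_pow]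
        push_cast; ring
      simp only [hh, harg]
    unfold wDbar
    rw [hev.fderiv_eq]
    exact wDbar_formula ε φ hφd hε hw0 hw1
  have hevG : (fun w : ℂ => wDbar (fun y : ℂ =>
        ((φ (((Real.log (1 / ‖y‖))⁻¹ - ε) / ε) : ℝ) : ℂ)) w)
      =ᶠ[nhds z] (fun w : ℂ => ((qq φ ε (Complex.normSq w) : ℝ) : ℂ) * w) := by
    have hU : IsOpen {w : ℂ | 0 < Complex.normSq w ∧ Complex.normSq w < 1} :=
      (isOpen_lt continuous_const Complex.continuous_normSq).inter
        (isOpen_lt Complex.continuous_normSq continuous_const)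
    filter_upwards [hU.mem_nhds ⟨hs0, hs1⟩] with w hw
    exact hGP w hw.1 hw.2
  unfold wD
  rw [hevG.fderiv_eq, wD_formula ε φ hφd2 hε hs0 hs1, Complex.norm_real, Real.norm_eq_abs, hsq]
  -- now a purely real estimate
  clear_value s ℓ
  rw [← hsdef]
  have hεne : ε ≠ 0 := hε.ne'
  have hsne : s ≠ 0 := hs0.ne'
  have hlne : ℓ ≠ 0 := hl.ne'
  have hE : qq φ ε s + s * Q1 φ ε s
      = deriv (deriv φ) (hh ε s) / (4 * ε^2 * s * ℓ^4)
        + deriv φ (hh ε s) / (2 * ε * s * ℓ^3) := by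
    unfold qq Q1
    rw [hLs]
    field_simp
    ring_nf
  rw [hE]
  rcases le_or_gt (hh ε s) 1 with hcase | hcase
  · -- the derivative bound case
    have hhs : hh ε s = (ℓ⁻¹ - ε) / ε := by
      have h2 : -Real.log s / 2 = ℓ := by rw [hLs]; ring
      unfold hh; rw [h2]
    have hinv : ℓ⁻¹ ≤ 2 * ε := by
      rw [hhs, div_le_one hε] at hcase
      linarith
    have h2εℓ : 1 ≤ 2 * ε * ℓ := by
      have := mul_le_mul_of_nonneg_right hinv hl.le
      rwa [inv_mul_cancel₀ hlne] at this
    have key0 : 0 < s * ℓ^2 := by positivity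
    have key1 : s * ℓ^2 ≤ 4 * ε^2 * s * ℓ^4 := by
      nlinarith [mul_le_mul_of_nonneg_left h2εℓ (mul_nonneg hs0.le (sq_nonneg ℓ)),
        mul_le_mul_of_nonneg_left (mul_le_mul h2εℓ h2εℓ (by norm_num) (by positivity))
          (mul_nonneg hs0.le (sq_nonneg ℓ))]
    have key2 : s * ℓ^2 ≤ 2 * ε * s * ℓ^3 := by
      nlinarith [mul_le_mul_of_nonneg_left h2εℓ (mul_nonneg hs0.le (sq_nonneg ℓ))]
    calc |deriv (deriv φ) (hh ε s) / (4 * ε^2 * s * ℓ^4)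
          + deriv φ (hh ε s) / (2 * ε * s * ℓ^3)|
        ≤ |deriv (deriv φ) (hh ε s) / (4 * ε^2 * s * ℓ^4)|
          + |deriv φ (hh ε s) / (2 * ε * s * ℓ^3)| := abs_add_le _ _
      _ = |deriv (deriv φ) (hh ε s)| / (4 * ε^2 * s * ℓ^4)
          + |deriv φ (hh ε s)| / (2 * ε * s * ℓ^3) := by
          rw [abs_div, abs_div, abs_of_pos (show (0:ℝ) < 4 * ε^2 * s * ℓ^4 by positivity),
            abs_of_pos (show (0:ℝ) < 2 * ε * s * ℓ^3 by positivity)]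
      _ ≤ |deriv (deriv φ) (hh ε s)| / (s * ℓ^2)
          + |deriv φ (hh ε s)| / (s * ℓ^2) := by
          gcongr
      _ = (|deriv φ (hh ε s)| + |deriv (deriv φ) (hh ε s)|) / (s * ℓ^2) := by ring
      _ ≤ 20 / (s * ℓ^2) := by
          gcongr
          linarith [hφbound (hh ε s)]
  · -- φ is locally constant there
    rw [hd1 _ hcase, hd2 _ hcase]
    simp
    positivity
end

section
/- Let c > 0, 0 < δ < 1, and let p : (0, δ] → ℝ be a C¹ function such that q(r) := r·p'(r) is differentiable with q'(r) ≤ c / ( r (log(1/r))² ) for all r ∈ (0, δ], and lim_{r→0⁺} q(r) = 0. Then r·p'(r) ≤ c / log(1/r) for all r ∈ (0, δ], and consequently p(r) ≥ p(δ) + c·log(log(1/δ)) − c·log(log(1/r)) for all r ∈ (0, δ]. -/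
open Real Set Filter

lemma hasDerivAt_cdivlog (c : ℝ) {x : ℝ} (hx : x ≠ 0) (hlx : Real.log x ≠ 0) :
    HasDerivAt (fun s => c / Real.log s) (-(c / (x * (Real.log x) ^ 2))) x := by
  have h := (hasDerivAt_const x c).div (Real.hasDerivAt_log hx) hlx
  refine h.congr_deriv ?_
  field_simp
  ring

lemma hasDerivAt_cloglog (c : ℝ) {x : ℝ} (hx : 0 < x) (hlx : Real.log x ≠ 0) :
    HasDerivAt (fun s => c * Real.log (-Real.log s)) (c / (x * Real.log x)) x := by
  have hin : HasDerivAt (fun s : ℝ => -Real.log s) (-x⁻¹) x :=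
    (Real.hasDerivAt_log hx.ne').neg
  have hout : HasDerivAt Real.log (-Real.log x)⁻¹ (-Real.log x) :=
    Real.hasDerivAt_log (by simpa using hlx)
  have := (hout.comp x hin).const_mul c
  refine this.congr_deriv ?_
  rw [inv_neg, div_eq_mul_inv, mul_inv]
  ring

theorem stmt_9 (c δ : ℝ) (hc : 0 < c) (h0 : 0 < δ) (h1 : δ < 1) (p : ℝ → ℝ)
    (hdiff : ∀ r ∈ Set.Ioc (0 : ℝ) δ, DifferentiableAt ℝ p r)
    (hcont : ContinuousOn (deriv p) (Set.Ioc (0 : ℝ) δ))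
    (hq : ∀ r ∈ Set.Ioc (0 : ℝ) δ,
      DifferentiableAt ℝ (fun s : ℝ => s * deriv p s) r ∧
      deriv (fun s : ℝ => s * deriv p s) r ≤ c / (r * (Real.log (1 / r)) ^ 2))
    (hlim : Filter.Tendsto (fun r : ℝ => r * deriv p r)
      (nhdsWithin 0 (Set.Ioi (0 : ℝ))) (nhds 0)) :
    (∀ r ∈ Set.Ioc (0 : ℝ) δ, r * deriv p r ≤ c / Real.log (1 / r)) ∧
    (∀ r ∈ Set.Ioc (0 : ℝ) δ,
      p δ + c * Real.log (Real.log (1 / δ)) - c * Real.log (Real.log (1 / r)) ≤ p r) := by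
  -- basic facts about points of Ioc 0 δ
  have hmem : ∀ x ∈ Set.Ioc (0 : ℝ) δ, 0 < x ∧ Real.log x < 0 := by
    intro x hx
    exact ⟨hx.1, Real.log_neg hx.1 (lt_of_le_of_lt hx.2 h1)⟩
  set F : ℝ → ℝ := fun s => s * deriv p s + c / Real.log s with hF
  -- F is antitone on Ioc 0 δ
  have hFanti : AntitoneOn F (Set.Ioc 0 δ) := by
    apply antitoneOn_of_deriv_nonpos (convex_Ioc 0 δ)
    · intro x hx
      obtain ⟨hx0, hlx⟩ := hmem x hx
      exact ((hq x hx).1.continuousAt.continuousWithinAt).add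
        ((hasDerivAt_cdivlog c hx0.ne' hlx.ne).differentiableAt.continuousAt.continuousWithinAt)
    · intro x hx
      rw [interior_Ioc] at hx
      obtain ⟨hx0, hlx⟩ := hmem x (Set.Ioo_subset_Ioc_self hx)
      exact (((hq x (Set.Ioo_subset_Ioc_self hx)).1).add
        (hasDerivAt_cdivlog c hx0.ne' hlx.ne).differentiableAt).differentiableWithinAt
    · intro x hx
      rw [interior_Ioc] at hx
      have hx' := Set.Ioo_subset_Ioc_self hx
      obtain ⟨hx0, hlx⟩ := hmem x hx'
      have h2 := hasDerivAt_cdivlog c hx0.ne' hlx.ne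
      have h1 := (hq x hx').1.hasDerivAt
      have hd : HasDerivAt F (deriv (fun s : ℝ => s * deriv p s) x
          + -(c / (x * (Real.log x) ^ 2))) x := h1.add h2
      rw [hd.deriv]
      have hb := (hq x hx').2
      have heq : c / (x * (Real.log (1 / x)) ^ 2) = c / (x * (Real.log x) ^ 2) := by
        rw [one_div, Real.log_inv, neg_sq]
      rw [heq] at hb
      linarith
  -- F tends to 0 at 0⁺
  have hFlim : Filter.Tendsto F (nhdsWithin 0 (Set.Ioi (0 : ℝ))) (nhds 0) := by
    have h2 : Filter.Tendsto (fun s : ℝ => c / Real.log s)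
        (nhdsWithin 0 (Set.Ioi (0 : ℝ))) (nhds 0) := by
      have hneg : Filter.Tendsto (fun s : ℝ => -Real.log s)
          (nhdsWithin 0 (Set.Ioi (0 : ℝ))) Filter.atTop :=
        tendsto_neg_atBot_atTop.comp Real.tendsto_log_nhdsGT_zero
      have := hneg.const_div_atTop (-c)
      simpa [neg_div_neg_eq] using this
    simpa using hlim.add h2
  -- part 1
  have part1 : ∀ r ∈ Set.Ioc (0 : ℝ) δ, r * deriv p r ≤ c / Real.log (1 / r) := by
    intro r hr
    obtain ⟨hr0, hlr⟩ := hmem r hr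
    have hFr : F r ≤ 0 := by
      refine ge_of_tendsto hFlim ?_
      filter_upwards [Ioo_mem_nhdsGT_of_mem (Set.mem_Ico.mpr ⟨le_refl 0, hr0⟩)] with s hs
      exact hFanti ⟨hs.1, hs.2.le.trans hr.2⟩ hr hs.2.le
    rw [one_div, Real.log_inv, div_neg]
    have hFr' : r * deriv p r + c / Real.log r ≤ 0 := hFr
    linarith
  refine ⟨part1, ?_⟩
  -- part 2
  set H : ℝ → ℝ := fun s => p s + c * Real.log (-Real.log s) with hH
  have hHanti : AntitoneOn H (Set.Ioc 0 δ) := by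
    apply antitoneOn_of_deriv_nonpos (convex_Ioc 0 δ)
    · intro x hx
      obtain ⟨hx0, hlx⟩ := hmem x hx
      exact ((hdiff x hx).continuousAt.continuousWithinAt).add
        ((hasDerivAt_cloglog c hx0 hlx.ne).differentiableAt.continuousAt.continuousWithinAt)
    · intro x hx
      rw [interior_Ioc] at hx
      have hx' := Set.Ioo_subset_Ioc_self hx
      obtain ⟨hx0, hlx⟩ := hmem x hx'
      exact ((hdiff x hx').add (hasDerivAt_cloglog c hx0 hlx.ne).differentiableAt).differentiableWithinAt
    · intro x hx
      rw [interior_Ioc] at hx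
      have hx' := Set.Ioo_subset_Ioc_self hx
      obtain ⟨hx0, hlx⟩ := hmem x hx'
      have h2 := hasDerivAt_cloglog c hx0 hlx.ne
      have hd : HasDerivAt H (deriv p x + c / (x * Real.log x)) x :=
        ((hdiff x hx').hasDerivAt).add h2
      rw [hd.deriv]
      have hb := part1 x hx'
      rw [one_div, Real.log_inv, div_neg] at hb
      -- x * deriv p x ≤ -(c / log x)
      have hdp : deriv p x ≤ -(c / Real.log x) / x := by
        rw [le_div_iff₀ hx0]
        linarith [hb]
      have : -(c / Real.log x) / x + c / (x * Real.log x) = 0 := by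
        field_simp
        ring
      linarith
  intro r hr
  obtain ⟨hr0, hlr⟩ := hmem r hr
  have hδ : δ ∈ Set.Ioc (0:ℝ) δ := ⟨h0, le_refl δ⟩
  have := hHanti hr hδ hr.2
  simp only [hH] at this
  rw [one_div, Real.log_inv, one_div, Real.log_inv]
  linarith
end

section
/- Let k be a natural number and let f(z) = ∑_{s=0}^{k} a_s z^s conj(z)^{k−s} be a homogeneous polynomial of z and z̄ of degree k which is real-valued, satisfies f(z) ≥ 0 for all z ∈ ℂ, and is not identically zero. Suppose the identity (∂_z f)(∂̄_z f) − f·(∂_z ∂̄_z f) = 0 holds on all of ℂ. Then k = 2p is even and f(z) = c·|z|^k for some constant c > 0. -/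
open Complex Finset


/-- A homogeneous polynomial of `z` and `z̄` of degree `k`:
`f(z) = ∑_{s=0}^{k} a_s z^s conj(z)^{k−s}`. -/
noncomputable def homPoly (k : ℕ) (a : ℕ → ℂ) (z : ℂ) : ℂ :=
  ∑ s ∈ Finset.range (k + 1), a s * z ^ s * (starRingEnd ℂ z) ^ (k - s)

noncomputable def conjCLM : ℂ →L[ℝ] ℂ := Complex.conjCLE.toContinuousLinearMap

noncomputable def Dmap (c : ℂ) (s t : ℕ) (z : ℂ) : ℂ →L[ℝ] ℂ :=
  (c * s * z^(s-1) * (starRingEnd ℂ z)^t) • ContinuousLinearMap.id ℝ ℂ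
  + (c * t * z^s * (starRingEnd ℂ z)^(t-1)) • conjCLM

lemma hasF_pow (s : ℕ) (z : ℂ) :
    HasFDerivAt (fun w : ℂ => w^s) (((s:ℂ) * z^(s-1)) • ContinuousLinearMap.id ℝ ℂ) z := by
  have h := (hasDerivAt_pow s z).hasFDerivAt.restrictScalars ℝ
  refine h.congr_fderiv ?_
  ext w
  simp [mul_comm]

lemma hasF_conj (z : ℂ) : HasFDerivAt (fun w : ℂ => (starRingEnd ℂ w)) conjCLM z := by
  have h := Complex.conjCLE.hasFDerivAt (x := z)
  exact h

lemma hasF_conj_pow (t : ℕ) (z : ℂ) :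
    HasFDerivAt (fun w : ℂ => (starRingEnd ℂ w)^t)
      (((t:ℂ) * (starRingEnd ℂ z)^(t-1)) • conjCLM) z := by
  have h := (hasF_pow t (starRingEnd ℂ z)).comp z (hasF_conj z)
  refine h.congr_fderiv ?_
  ext w
  simp

lemma hasF_mono (c : ℂ) (s t : ℕ) (z : ℂ) :
    HasFDerivAt (fun w : ℂ => c * w^s * (starRingEnd ℂ w)^t) (Dmap c s t z) z := by
  have h := ((hasF_pow s z).const_mul c).mul (hasF_conj_pow t z)
  refine h.congr_fderiv ?_
  ext w
  simp [Dmap, conjCLM, ContinuousLinearMap.smul_apply]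
  ring

lemma hasF_sum (S : Finset ℕ) (c : ℕ → ℂ) (e1 e2 : ℕ → ℕ) (z : ℂ) :
    HasFDerivAt (fun w : ℂ => ∑ s ∈ S, c s * w^(e1 s) * (starRingEnd ℂ w)^(e2 s))
      (∑ s ∈ S, Dmap (c s) (e1 s) (e2 s) z) z :=
  HasFDerivAt.fun_sum fun s _ => hasF_mono (c s) (e1 s) (e2 s) z

lemma wD_sum (S : Finset ℕ) (c : ℕ → ℂ) (e1 e2 : ℕ → ℕ) (z : ℂ) :
    wD (fun w : ℂ => ∑ s ∈ S, c s * w^(e1 s) * (starRingEnd ℂ w)^(e2 s)) z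
      = ∑ s ∈ S, c s * (e1 s) * z^(e1 s - 1) * (starRingEnd ℂ z)^(e2 s) := by
  rw [wD, (hasF_sum S c e1 e2 z).fderiv]
  rw [ContinuousLinearMap.sum_apply, ContinuousLinearMap.sum_apply, Finset.mul_sum,
    ← Finset.sum_sub_distrib, Finset.sum_div]
  refine Finset.sum_congr rfl fun s _ => ?_
  simp only [Dmap, ContinuousLinearMap.add_apply, ContinuousLinearMap.smul_apply,
    ContinuousLinearMap.id_apply, conjCLM, ContinuousLinearEquiv.coe_coe, Complex.conjCLE_apply,
    smul_eq_mul, mul_one, map_one, Complex.conj_I]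
  linear_combination ((c s * (e2 s) * z^(e1 s) * (starRingEnd ℂ z)^(e2 s - 1)
    - c s * (e1 s) * z^(e1 s - 1) * (starRingEnd ℂ z)^(e2 s))/2) * Complex.I_sq

lemma wDbar_sum (S : Finset ℕ) (c : ℕ → ℂ) (e1 e2 : ℕ → ℕ) (z : ℂ) :
    wDbar (fun w : ℂ => ∑ s ∈ S, c s * w^(e1 s) * (starRingEnd ℂ w)^(e2 s)) z
      = ∑ s ∈ S, c s * (e2 s) * z^(e1 s) * (starRingEnd ℂ z)^(e2 s - 1) := by
  rw [wDbar, (hasF_sum S c e1 e2 z).fderiv]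
  rw [ContinuousLinearMap.sum_apply, ContinuousLinearMap.sum_apply, Finset.mul_sum,
    ← Finset.sum_add_distrib, Finset.sum_div]
  refine Finset.sum_congr rfl fun s _ => ?_
  simp only [Dmap, ContinuousLinearMap.add_apply, ContinuousLinearMap.smul_apply,
    ContinuousLinearMap.id_apply, conjCLM, ContinuousLinearEquiv.coe_coe, Complex.conjCLE_apply,
    smul_eq_mul, mul_one, map_one, Complex.conj_I]
  linear_combination ((c s * (e1 s) * z^(e1 s - 1) * (starRingEnd ℂ z)^(e2 s)
    - c s * (e2 s) * z^(e1 s) * (starRingEnd ℂ z)^(e2 s - 1))/2) * Complex.I_sq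

noncomputable def Wc (k s : ℕ) : ℂ := 2*(s:ℂ) - k

noncomputable def Gf (k : ℕ) (a : ℕ → ℂ) (θ : ℝ) : ℂ :=
  ∑ s ∈ Finset.range (k+1), a s * Complex.exp (Wc k s * I * θ)
noncomputable def G1 (k : ℕ) (a : ℕ → ℂ) (θ : ℝ) : ℂ :=
  ∑ s ∈ Finset.range (k+1), a s * (Wc k s * I) * Complex.exp (Wc k s * I * θ)
noncomputable def G2 (k : ℕ) (a : ℕ → ℂ) (θ : ℝ) : ℂ :=
  ∑ s ∈ Finset.range (k+1), a s * (Wc k s * I)^2 * Complex.exp (Wc k s * I * θ)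
noncomputable def Uf (k : ℕ) (a : ℕ → ℂ) (θ : ℝ) : ℂ :=
  ∑ s ∈ Finset.range (k+1), (s:ℂ) * a s * Complex.exp (Wc k s * I * θ)
noncomputable def Vf (k : ℕ) (a : ℕ → ℂ) (θ : ℝ) : ℂ :=
  ∑ s ∈ Finset.range (k+1), ((k-s : ℕ):ℂ) * a s * Complex.exp (Wc k s * I * θ)
noncomputable def Pf (k : ℕ) (a : ℕ → ℂ) (θ : ℝ) : ℂ :=
  ∑ s ∈ Finset.range (k+1), (s:ℂ) * ((k-s : ℕ):ℂ) * a s * Complex.exp (Wc k s * I * θ)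

lemma conj_exp (θ : ℝ) : (starRingEnd ℂ) (Complex.exp (θ * I)) = Complex.exp (-(θ * I)) := by
  rw [← Complex.exp_conj]
  congr 1
  simp

lemma Epow (m n : ℕ) (θ : ℝ) :
    (Complex.exp (θ * I))^m * (starRingEnd ℂ (Complex.exp (θ * I)))^n
      = Complex.exp (((m:ℂ) - n) * I * θ) := by
  rw [conj_exp, ← Complex.exp_nat_mul, ← Complex.exp_nat_mul, ← Complex.exp_add]
  congr 1
  ring

lemma L1 (k : ℕ) (a : ℕ → ℂ) (θ : ℝ) : homPoly k a (Complex.exp (θ * I)) = Gf k a θ := by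
  refine Finset.sum_congr rfl fun s hs => ?_
  have hsk : s ≤ k := Nat.lt_succ_iff.mp (Finset.mem_range.mp hs)
  rw [mul_assoc, Epow]
  congr 2
  rw [Wc]
  push_cast [Nat.cast_sub hsk]
  ring

lemma L2 (k : ℕ) (a : ℕ → ℂ) (θ : ℝ) :
    wD (homPoly k a) (Complex.exp (θ * I)) = Complex.exp (-(θ * I)) * Uf k a θ := by
  have h := wD_sum (Finset.range (k+1)) a (fun s => s) (fun s => k - s) (Complex.exp (θ * I))
  rw [show homPoly k a = fun w => ∑ s ∈ Finset.range (k+1),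
    a s * w ^ s * (starRingEnd ℂ w) ^ (k - s) from rfl, h, Uf, Finset.mul_sum]
  refine Finset.sum_congr rfl fun s hs => ?_
  have hsk : s ≤ k := Nat.lt_succ_iff.mp (Finset.mem_range.mp hs)
  rcases Nat.eq_zero_or_pos s with h0 | h1
  · simp [h0]
  · rw [mul_assoc, Epow]
    have he : Complex.exp (((↑(s-1) : ℂ) - ↑(k-s)) * I * ↑θ)
        = Complex.exp (-(↑θ * I)) * Complex.exp (Wc k s * I * ↑θ) := by
      rw [← Complex.exp_add]
      congr 1
      rw [Wc]
      push_cast [Nat.cast_sub hsk, Nat.cast_sub h1]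
      ring
    rw [he]
    ring

lemma L3 (k : ℕ) (a : ℕ → ℂ) (θ : ℝ) :
    wDbar (homPoly k a) (Complex.exp (θ * I)) = Complex.exp (θ * I) * Vf k a θ := by
  have h := wDbar_sum (Finset.range (k+1)) a (fun s => s) (fun s => k - s) (Complex.exp (θ * I))
  rw [show homPoly k a = fun w => ∑ s ∈ Finset.range (k+1),
    a s * w ^ s * (starRingEnd ℂ w) ^ (k - s) from rfl, h, Vf, Finset.mul_sum]
  refine Finset.sum_congr rfl fun s hs => ?_
  have hsk : s ≤ k := Nat.lt_succ_iff.mp (Finset.mem_range.mp hs)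
  rcases Nat.lt_or_ge s k with h1 | h2
  · rw [mul_assoc, Epow]
    have he : Complex.exp (((s : ℂ) - ↑(k-s-1)) * I * ↑θ)
        = Complex.exp (↑θ * I) * Complex.exp (Wc k s * I * ↑θ) := by
      rw [← Complex.exp_add]
      congr 1
      rw [Wc]
      push_cast [Nat.cast_sub hsk, Nat.cast_sub (Nat.le_sub_one_of_lt h1),
        Nat.cast_sub (Nat.one_le_iff_ne_zero.mpr (Nat.sub_ne_zero_of_lt h1))]
      ring
    rw [he]
    ring
  · have : k - s = 0 := Nat.sub_eq_zero_of_le h2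
    simp [this]

lemma L4 (k : ℕ) (a : ℕ → ℂ) (θ : ℝ) :
    wD (fun w => wDbar (homPoly k a) w) (Complex.exp (θ * I)) = Pf k a θ := by
  have hfun : (fun w => wDbar (homPoly k a) w) = fun w => ∑ s ∈ Finset.range (k+1),
      (a s * ((k-s : ℕ):ℂ)) * w ^ s * (starRingEnd ℂ w) ^ (k - s - 1) := by
    funext w
    have h := wDbar_sum (Finset.range (k+1)) a (fun s => s) (fun s => k - s) w
    exact h
  rw [hfun, wD_sum, Pf]
  refine Finset.sum_congr rfl fun s hs => ?_
  have hsk : s ≤ k := Nat.lt_succ_iff.mp (Finset.mem_range.mp hs)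
  rcases Nat.eq_zero_or_pos s with h0 | h1
  · simp [h0]
  rcases Nat.lt_or_ge s k with hlt | h2
  · rw [mul_assoc, Epow]
    have he : ((↑(s-1) : ℂ) - ↑(k-s-1)) * I * ↑θ = Wc k s * I * ↑θ := by
      rw [Wc]
      push_cast [Nat.cast_sub hsk, Nat.cast_sub h1, Nat.cast_sub (Nat.le_sub_one_of_lt hlt),
        Nat.cast_sub (Nat.one_le_iff_ne_zero.mpr (Nat.sub_ne_zero_of_lt hlt))]
      ring
    rw [he]
    ring
  · have : k - s = 0 := Nat.sub_eq_zero_of_le h2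
    simp [this]

lemma hasDerivAt_exp_term (c : ℂ) (θ : ℝ) :
    HasDerivAt (fun t : ℝ => Complex.exp (c * I * t)) (c * I * Complex.exp (c * I * θ)) θ := by
  have h1 : HasDerivAt (fun w : ℂ => Complex.exp (c * I * w)) (Complex.exp (c * I * θ) * (c * I)) (θ:ℂ) := by
    simpa using ((hasDerivAt_id (θ:ℂ)).const_mul (c * I)).cexp
  simpa [mul_comm] using h1.comp_ofReal

lemma hasDerivAt_Gf (k : ℕ) (a : ℕ → ℂ) (θ : ℝ) :
    HasDerivAt (Gf k a) (G1 k a θ) θ := by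
  apply HasDerivAt.fun_sum
  intro s _
  have := (hasDerivAt_exp_term (Wc k s) θ).const_mul (a s)
  refine this.congr_deriv ?_
  ring

lemma hasDerivAt_G1 (k : ℕ) (a : ℕ → ℂ) (θ : ℝ) :
    HasDerivAt (G1 k a) (G2 k a θ) θ := by
  apply HasDerivAt.fun_sum
  intro s _
  have := (hasDerivAt_exp_term (Wc k s) θ).const_mul (a s * (Wc k s * I))
  refine this.congr_deriv ?_
  ring

lemma Uf_eq (k : ℕ) (a : ℕ → ℂ) (θ : ℝ) :
    Uf k a θ = ((k:ℂ) * Gf k a θ - I * G1 k a θ)/2 := by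
  rw [Uf, Gf, G1, Finset.mul_sum, Finset.mul_sum, ← Finset.sum_sub_distrib, Finset.sum_div]
  refine Finset.sum_congr rfl fun s hs => ?_
  have hw : Wc k s = 2*(s:ℂ) - k := rfl
  set e := Complex.exp (Wc k s * I * θ) with he
  linear_combination (a s * Wc k s * e/2) * Complex.I_sq - (a s * e/2) * hw

lemma Vf_eq (k : ℕ) (a : ℕ → ℂ) (θ : ℝ) :
    Vf k a θ = ((k:ℂ) * Gf k a θ + I * G1 k a θ)/2 := by
  rw [Vf, Gf, G1, Finset.mul_sum, Finset.mul_sum, ← Finset.sum_add_distrib, Finset.sum_div]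
  refine Finset.sum_congr rfl fun s hs => ?_
  have hsk : s ≤ k := Nat.lt_succ_iff.mp (Finset.mem_range.mp hs)
  have hw : Wc k s = 2*(s:ℂ) - k := rfl
  rw [Nat.cast_sub hsk]
  set e := Complex.exp (Wc k s * I * θ) with he
  linear_combination (-(a s * Wc k s * e)/2) * Complex.I_sq + (a s * e/2) * hw

lemma Pf_eq (k : ℕ) (a : ℕ → ℂ) (θ : ℝ) :
    Pf k a θ = ((k:ℂ)^2 * Gf k a θ + G2 k a θ)/4 := by
  rw [Pf, Gf, G2, Finset.mul_sum, ← Finset.sum_add_distrib, Finset.sum_div]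
  refine Finset.sum_congr rfl fun s hs => ?_
  have hsk : s ≤ k := Nat.lt_succ_iff.mp (Finset.mem_range.mp hs)
  have hw : Wc k s = 2*(s:ℂ) - k := rfl
  rw [Nat.cast_sub hsk]
  set e := Complex.exp (Wc k s * I * θ) with he
  linear_combination (-(a s * Wc k s^2 * e)/4) * Complex.I_sq
    + (a s * e * (Wc k s + (2*(s:ℂ)-k))/4) * hw

lemma key_ode (k : ℕ) (a : ℕ → ℂ)
    (hid : ∀ z : ℂ,
      wD (homPoly k a) z * wDbar (homPoly k a) z
        - homPoly k a z * wD (fun w : ℂ => wDbar (homPoly k a) w) z = 0) (θ : ℝ) :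
    G1 k a θ^2 = Gf k a θ * G2 k a θ := by
  have h := hid (Complex.exp (θ*I))
  rw [L2, L3, L4, L1] at h
  have hexp : Complex.exp (-((θ:ℂ)*I)) * Complex.exp ((θ:ℂ)*I) = 1 := by
    rw [← Complex.exp_add]; simp
  have hUV : Uf k a θ * Vf k a θ = Gf k a θ * Pf k a θ := by
    linear_combination h - (Uf k a θ * Vf k a θ) * hexp
  rw [Uf_eq, Vf_eq, Pf_eq] at hUV
  linear_combination 4*hUV + G1 k a θ^2 * Complex.I_sq

lemma real_ode_const (h h1 h2 : ℝ → ℝ)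
    (dh : ∀ x, HasDerivAt h (h1 x) x) (dh1 : ∀ x, HasDerivAt h1 (h2 x) x)
    (hc2 : Continuous h2)
    (hnn : ∀ x, 0 ≤ h x)
    (ode : ∀ x, h1 x^2 = h x * h2 x)
    (hper : ∀ x, h (x + 2*Real.pi) = h x) :
    ∀ x y, h x = h y := by
  have hcont1 : Continuous h1 := by
    have : Differentiable ℝ h1 := fun x => (dh1 x).differentiableAt
    exact this.continuous
  -- h2 is nonnegative
  have h2nn : ∀ x, 0 ≤ h2 x := by
    intro x
    by_contra hneg
    push_neg at hneg
    have h1x : h1 x = 0 := by nlinarith [sq_nonneg (h1 x), hnn x, ode x]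
    -- find ε with h2 < 0 on ball
    obtain ⟨ε, hε, hball⟩ := Metric.isOpen_iff.mp (isOpen_Iio.preimage hc2) x hneg
    set b := x + ε/2 with hb
    have hxb : x < b := by simp [hb]; linarith
    have hanti1 : StrictAntiOn h1 (Set.Icc x b) := by
      apply strictAntiOn_of_deriv_neg (convex_Icc x b) (hcont1.continuousOn)
      intro y hy
      rw [interior_Icc] at hy
      have : y ∈ Metric.ball x ε := by
        rw [Metric.mem_ball, Real.dist_eq, abs_lt]
        have hy2 : y < b := hy.2
        rw [hb] at hy2
        constructor
        · linarith [hy.1]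
        · linarith
      have := hball this
      rw [(dh1 y).deriv]
      exact this
    have h1neg : ∀ y ∈ Set.Ioo x b, h1 y < 0 := by
      intro y hy
      have := hanti1 (Set.left_mem_Icc.mpr hxb.le) ⟨hy.1.le, hy.2.le⟩ hy.1
      rwa [h1x] at this
    have hanti : StrictAntiOn h (Set.Icc x b) := by
      apply strictAntiOn_of_deriv_neg (convex_Icc x b)
      · have hdiff : Differentiable ℝ h := fun y => (dh y).differentiableAt
        exact hdiff.continuous.continuousOn
      · intro y hy
        rw [interior_Icc] at hy
        rw [(dh y).deriv]
        exact h1neg y hy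
    have hlt : h b < h x := hanti (Set.left_mem_Icc.mpr hxb.le) (Set.right_mem_Icc.mpr hxb.le) hxb
    have hx0 : h x = 0 := by nlinarith [hnn x, ode x, sq_nonneg (h1 x)]
    have := hnn b
    linarith
  -- h1 is monotone
  have hmono : Monotone h1 := by
    apply monotone_of_deriv_nonneg (fun x => (dh1 x).differentiableAt)
    intro x
    rw [(dh1 x).deriv]
    exact h2nn x
  -- h1 is periodic
  have h1per : ∀ x, h1 (x + 2*Real.pi) = h1 x := by
    intro x
    have e1 : HasDerivAt (fun t => h (t + 2*Real.pi)) (h1 (x + 2*Real.pi) * 1) x :=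
      (dh (x + 2*Real.pi)).comp x ((hasDerivAt_id x).add_const (2*Real.pi))
    rw [mul_one] at e1
    have e2 : (fun t => h (t + 2*Real.pi)) = h := funext hper
    rw [e2] at e1
    exact e1.unique (dh x)
  have h1pern : ∀ (n : ℕ) (x : ℝ), h1 (x + n*(2*Real.pi)) = h1 x := by
    intro n
    induction n with
    | zero => simp
    | succ m ih =>
      intro x
      have : x + (m+1 : ℕ)*(2*Real.pi) = (x + m*(2*Real.pi)) + 2*Real.pi := by
        push_cast; ring
      rw [this, h1per, ih]
  -- h1 is constant
  have h1const : ∀ x y, h1 x = h1 y := by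
    have key : ∀ x y : ℝ, x ≤ y → h1 x = h1 y := by
      intro x y hxy
      obtain ⟨n, hn⟩ := exists_nat_ge ((y - x)/(2*Real.pi))
      have hy2 : y ≤ x + n*(2*Real.pi) := by
        have hpi : (0:ℝ) < 2*Real.pi := by positivity
        rw [div_le_iff₀ hpi] at hn
        linarith
      have := hmono hy2
      rw [h1pern n x] at this
      exact le_antisymm (hmono hxy) this
    intro x y
    rcases le_total x y with hc | hc
    · exact key x y hc
    · exact (key y x hc).symm
  -- the constant is 0
  have h10 : ∀ x, h1 x = 0 := by
    intro x
    have hc : ∀ y, h1 y = h1 0 := fun y => h1const y 0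
    have dg : ∀ t : ℝ, HasDerivAt (fun t => h t - h1 0 * t) 0 t := by
      intro t
      have := (dh t).fun_sub ((hasDerivAt_id t).const_mul (h1 0))
      simpa [hc t] using this
    have gconst := is_const_of_deriv_eq_zero (f := fun t => h t - h1 0 * t)
      (fun t => (dg t).differentiableAt) (fun t => (dg t).deriv) (2*Real.pi) 0
    have hp := hper 0
    simp only [zero_add] at hp
    have hpi : (0:ℝ) < 2*Real.pi := by positivity
    have : h1 0 = 0 := by
      have : h (2*Real.pi) - h1 0 * (2*Real.pi) = h 0 - h1 0 * 0 := gconst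
      rw [hp] at this
      have := this
      nlinarith
    rw [hc x, this]
  intro x y
  have := is_const_of_deriv_eq_zero (f := h) (fun t => (dh t).differentiableAt)
    (fun t => by rw [(dh t).deriv]; exact h10 t) x y
  exact this

lemma homog (k : ℕ) (a : ℕ → ℂ) (r : ℝ) (w : ℂ) :
    homPoly k a (r * w) = (r:ℂ)^k * homPoly k a w := by
  unfold homPoly
  rw [Finset.mul_sum]
  refine Finset.sum_congr rfl fun s hs => ?_
  have hsk : s ≤ k := Nat.lt_succ_iff.mp (Finset.mem_range.mp hs)
  rw [map_mul, Complex.conj_ofReal, mul_pow, mul_pow]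
  have hr : (r:ℂ)^s * (r:ℂ)^(k-s) = (r:ℂ)^k := by
    rw [← pow_add, Nat.add_sub_cancel' hsk]
  linear_combination (a s * w ^ s * (starRingEnd ℂ w) ^ (k - s)) * hr

lemma homPoly_zero (k : ℕ) (a : ℕ → ℂ) (hk : 0 < k) : homPoly k a 0 = 0 := by
  unfold homPoly
  apply Finset.sum_eq_zero
  intro s hs
  rcases Nat.eq_zero_or_pos s with h0 | h1
  · subst h0
    simp [zero_pow (Nat.pos_iff_ne_zero.mp hk)]
  · simp [zero_pow (Nat.pos_iff_ne_zero.mp h1)]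

theorem stmt_12 (k : ℕ) (a : ℕ → ℂ)
    (hreal : ∀ z : ℂ, (homPoly k a z).im = 0)
    (hpos : ∀ z : ℂ, 0 ≤ (homPoly k a z).re)
    (hne : ∃ z : ℂ, homPoly k a z ≠ 0)
    (hid : ∀ z : ℂ,
      wD (homPoly k a) z * wDbar (homPoly k a) z
        - homPoly k a z * wD (fun w : ℂ => wDbar (homPoly k a) w) z = 0) :
    ∃ p : ℕ, k = 2 * p ∧ ∃ c : ℝ, 0 < c ∧
      ∀ z : ℂ, homPoly k a z = ((c * ‖z‖ ^ k : ℝ) : ℂ) := by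
  set hR : ℝ → ℝ := fun θ => (Gf k a θ).re with hRdef
  set h1R : ℝ → ℝ := fun θ => (G1 k a θ).re with h1Rdef
  set h2R : ℝ → ℝ := fun θ => (G2 k a θ).re with h2Rdef
  have hGre : ∀ θ, Gf k a θ = ((hR θ : ℝ) : ℂ) := by
    intro θ
    have him : (Gf k a θ).im = 0 := by rw [← L1]; exact hreal _
    exact Complex.ext rfl (by simp [him])
  have dh : ∀ θ, HasDerivAt hR (h1R θ) θ := fun θ =>
    Complex.reCLM.hasFDerivAt.comp_hasDerivAt θ (hasDerivAt_Gf k a θ)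
  have dh1 : ∀ θ, HasDerivAt h1R (h2R θ) θ := fun θ =>
    Complex.reCLM.hasFDerivAt.comp_hasDerivAt θ (hasDerivAt_G1 k a θ)
  have hG1re : ∀ θ, G1 k a θ = ((h1R θ : ℝ) : ℂ) := by
    intro θ
    have hof : HasDerivAt (fun t : ℝ => ((hR t : ℝ) : ℂ)) ((h1R θ : ℝ) : ℂ) θ :=
      Complex.ofRealCLM.hasFDerivAt.comp_hasDerivAt θ (dh θ)
    have heq : (fun t : ℝ => ((hR t : ℝ) : ℂ)) = Gf k a := funext fun t => (hGre t).symm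
    rw [heq] at hof
    exact ((hasDerivAt_Gf k a θ).unique hof)
  have hG2re : ∀ θ, G2 k a θ = ((h2R θ : ℝ) : ℂ) := by
    intro θ
    have hof : HasDerivAt (fun t : ℝ => ((h1R t : ℝ) : ℂ)) ((h2R θ : ℝ) : ℂ) θ :=
      Complex.ofRealCLM.hasFDerivAt.comp_hasDerivAt θ (dh1 θ)
    have heq : (fun t : ℝ => ((h1R t : ℝ) : ℂ)) = G1 k a := funext fun t => (hG1re t).symm
    rw [heq] at hof
    exact ((hasDerivAt_G1 k a θ).unique hof)
  have realode : ∀ θ, h1R θ^2 = hR θ * h2R θ := by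
    intro θ
    have h := key_ode k a hid θ
    rw [hGre, hG1re, hG2re] at h
    exact_mod_cast h
  have hnn : ∀ θ, 0 ≤ hR θ := by
    intro θ
    have : hR θ = (homPoly k a (Complex.exp (θ * I))).re := by rw [hRdef]; rw [L1]
    rw [this]; exact hpos _
  have hper : ∀ θ, hR (θ + 2*Real.pi) = hR θ := by
    intro θ
    have : Gf k a (θ + 2*Real.pi) = Gf k a θ := by
      rw [← L1, ← L1]
      congr 1
      push_cast
      rw [add_mul, Complex.exp_add]
      rw [show ((2:ℂ) * Real.pi * I) = 2 * Real.pi * I from by push_cast; ring,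
        Complex.exp_two_pi_mul_I, mul_one]
    rw [hRdef]
    simp only
    rw [this]
  have hc2 : Continuous h2R := by
    apply Complex.continuous_re.comp
    apply continuous_finset_sum
    intro s _
    exact continuous_const.mul (Complex.continuous_exp.comp
      (continuous_const.mul Complex.continuous_ofReal))
  have hconst := real_ode_const hR h1R h2R dh dh1 hc2 hnn realode hper
  -- find θ₀ with hR θ₀ > 0
  have hGf_ne : ∃ θ₀, hR θ₀ > 0 := by
    obtain ⟨z, hz⟩ := hne
    by_cases hz0 : z = 0
    · subst hz0
      rcases Nat.eq_zero_or_pos k with hk0 | hk1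
      · subst hk0
        refine ⟨0, ?_⟩
        have : Gf 0 a 0 = a 0 := by simp [Gf, Wc]
        have ha0 : homPoly 0 a 0 = a 0 := by simp [homPoly]
        have hGne : hR 0 ≠ 0 := by
          intro hcon
          apply hz
          rw [ha0, ← this, hGre 0, hcon]
          simp
        exact lt_of_le_of_ne (hnn 0) (Ne.symm hGne)
      · exact absurd (homPoly_zero k a hk1) hz
    · refine ⟨Complex.arg z, ?_⟩
      have hz1 : (↑‖z‖ : ℂ) * Complex.exp (↑(Complex.arg z) * I) = z :=
        Complex.norm_mul_exp_arg_mul_I z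
      have habs : (0:ℝ) < ‖z‖ := by
        simpa [AbsoluteValue.pos_iff] using hz0
      have : homPoly k a z = (↑‖z‖ : ℂ)^k * Gf k a (Complex.arg z) := by
        conv_lhs => rw [← hz1]
        rw [homog, L1]
      have hGne : hR (Complex.arg z) ≠ 0 := by
        intro hcon
        apply hz
        rw [this, hGre, hcon]
        simp
      exact lt_of_le_of_ne (hnn _) (Ne.symm hGne)
  obtain ⟨θ₀, hθ₀⟩ := hGf_ne
  set c : ℝ := hR θ₀ with hcdef
  have hRall : ∀ θ, hR θ = c := fun θ => hconst θ θ₀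
  have hGall : ∀ θ, Gf k a θ = (c : ℂ) := fun θ => by rw [hGre θ, hRall θ]
  -- k is even
  have hone : homPoly k a 1 = (c:ℂ) := by
    have : (1:ℂ) = Complex.exp ((0:ℝ) * I) := by simp
    rw [this, L1, hGall]
  have hnegone : homPoly k a (-1) = (c:ℂ) := by
    have : (-1:ℂ) = Complex.exp ((Real.pi:ℝ) * I) := by
      rw [show ((Real.pi:ℝ):ℂ) * I = ↑Real.pi * I from rfl, Complex.exp_pi_mul_I]
    rw [this, L1, hGall]
  have hminus : homPoly k a (-1) = ((-1:ℝ):ℂ)^k * homPoly k a 1 := by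
    have h1 : ((-1:ℝ):ℂ) * 1 = -1 := by norm_num
    conv_lhs => rw [← h1]
    rw [homog]
  have hceven : ((-1:ℂ))^k = 1 := by
    rw [hnegone, hone] at hminus
    have hcne : (c:ℂ) ≠ 0 := by
      simp only [ne_eq, Complex.ofReal_eq_zero]
      exact ne_of_gt hθ₀
    have h2 : ((-1:ℝ):ℂ)^k * (c:ℂ) = 1 * (c:ℂ) := by rw [one_mul]; exact hminus.symm
    have h3 := mul_right_cancel₀ hcne h2
    push_cast at h3
    exact h3
  have heven : Even k := by
    rwa [neg_one_pow_eq_one_iff_even (by norm_num : (-1:ℂ) ≠ 1)] at hceven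
  obtain ⟨p, hp⟩ := heven
  refine ⟨p, by omega, c, hθ₀, ?_⟩
  intro z
  by_cases hz0 : z = 0
  · subst hz0
    rcases Nat.eq_zero_or_pos k with hk0 | hk1
    · subst hk0
      have : homPoly 0 a 0 = a 0 := by simp [homPoly]
      rw [this]
      have h2 : Gf 0 a 0 = a 0 := by simp [Gf, Wc]
      rw [← h2, hGall]
      simp
    · rw [homPoly_zero k a hk1]
      rw [norm_zero, zero_pow (Nat.pos_iff_ne_zero.mp hk1)]
      simp
  · have hz1 : (↑‖z‖ : ℂ) * Complex.exp (↑(Complex.arg z) * I) = z :=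
      Complex.norm_mul_exp_arg_mul_I z
    conv_lhs => rw [← hz1]
    rw [homog, L1, hGall]
    push_cast
    ring
end

section
/- Let k be a natural number and let f(z) = ∑_{s=0}^{k} a_s z^s conj(z)^{k−s} be a homogeneous polynomial of z and z̄ of degree k which is real-valued, satisfies f(z) ≥ 0 for all z ∈ ℂ, and is not identically zero. Suppose there is a constant c₁ > 0 such that for every z with 0 < |z| < 1 and f(z) ≠ 0, | (∂_z f)(∂̄_z f) − f·(∂_z ∂̄_z f) | (z) ≤ c₁ · f(z)² / ( |z|² (log(1/|z|))² ). Then (∂_z f)(∂̄_z f) − f·(∂_z ∂̄_z f) is identically zero on ℂ. -/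
open Complex Finset

noncomputable def clm (A B : ℂ) : ℂ →L[ℝ] ℂ :=
  A • (ContinuousLinearMap.id ℝ ℂ) + B • (Complex.conjCLE : ℂ ≃L[ℝ] ℂ).toContinuousLinearMap

@[simp] lemma clm_apply (A B v : ℂ) : clm A B v = A * v + B * (starRingEnd ℂ v) := by
  simp [clm, Complex.conjCLE_apply]

lemma key (p q : ℕ) (z : ℂ) :
    HasFDerivAt (fun w : ℂ => w ^ p * (starRingEnd ℂ w) ^ q)
      (clm ((p:ℂ) * z^(p-1) * (starRingEnd ℂ z)^q) ((q:ℂ) * z^p * (starRingEnd ℂ z)^(q-1))) z := by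
  have h1 : HasFDerivAt (fun w : ℂ => w ^ p) (clm ((p:ℂ)*z^(p-1)) 0) z := by
    have := ((hasDerivAt_pow p z).hasFDerivAt).restrictScalars ℝ
    refine this.congr_fderiv ?_
    ext v
    simp
    ring
  have h2 : HasFDerivAt (fun w : ℂ => (starRingEnd ℂ w) ^ q)
      (clm 0 ((q:ℂ) * (starRingEnd ℂ z)^(q-1))) z := by
    have hc : HasFDerivAt (fun w : ℂ => starRingEnd ℂ w)
        ((Complex.conjCLE : ℂ ≃L[ℝ] ℂ).toContinuousLinearMap) z :=
      Complex.conjCLE.hasFDerivAt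
    have hp := ((hasDerivAt_pow q (starRingEnd ℂ z)).hasFDerivAt).restrictScalars ℝ
    have := hp.comp z hc
    refine this.congr_fderiv ?_
    ext v
    simp
    ring
  have := h1.mul h2
  refine this.congr_fderiv ?_
  ext v
  simp
  ring

lemma clm_add (A B A' B' : ℂ) : clm A B + clm A' B' = clm (A + A') (B + B') := by
  ext v; simp; ring

lemma clm_smul (c A B : ℂ) : c • clm A B = clm (c*A) (c*B) := by
  ext v; simp; ring

lemma key_sum (b : ℕ → ℂ) (p q : ℕ → ℕ) (S : Finset ℕ) (z : ℂ) :
    HasFDerivAt (fun w : ℂ => ∑ s ∈ S, b s * (w ^ p s * (starRingEnd ℂ w) ^ q s))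
      (clm (∑ s ∈ S, b s * ((p s : ℂ) * z^(p s - 1) * (starRingEnd ℂ z)^(q s)))
           (∑ s ∈ S, b s * ((q s : ℂ) * z^(p s) * (starRingEnd ℂ z)^(q s - 1)))) z := by
  induction S using Finset.induction_on with
  | empty =>
      have h0 : clm 0 0 = 0 := by ext v; simp
      simp only [Finset.sum_empty, h0]
      exact hasFDerivAt_const 0 z
  | insert x S hx ih =>
      simp only [Finset.sum_insert hx, ← clm_add, ← clm_smul]
      exact HasFDerivAt.add ((key (p x) (q x) z).const_mul (b x)) ih

lemma wD_of_hasFDerivAt {f : ℂ → ℂ} {A B : ℂ} {z : ℂ} (h : HasFDerivAt f (clm A B) z) :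
    wD f z = A := by
  rw [wD, h.fderiv]
  simp [Complex.ext_iff]
  ring

lemma wDbar_of_hasFDerivAt {f : ℂ → ℂ} {A B : ℂ} {z : ℂ} (h : HasFDerivAt f (clm A B) z) :
    wDbar f z = B := by
  rw [wDbar, h.fderiv]
  simp [Complex.ext_iff]
  ring_nf
  exact ⟨trivial, trivial⟩

noncomputable def D1 (k : ℕ) (a : ℕ → ℂ) (z : ℂ) : ℂ :=
  ∑ s ∈ Finset.range (k+1), a s * ((s:ℂ) * z^(s-1) * (starRingEnd ℂ z)^(k-s))

noncomputable def D2 (k : ℕ) (a : ℕ → ℂ) (z : ℂ) : ℂ :=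
  ∑ s ∈ Finset.range (k+1), a s * (((k-s:ℕ):ℂ) * z^s * (starRingEnd ℂ z)^(k-s-1))

noncomputable def D12 (k : ℕ) (a : ℕ → ℂ) (z : ℂ) : ℂ :=
  ∑ s ∈ Finset.range (k+1), (a s * ((k-s:ℕ):ℂ)) * ((s:ℂ) * z^(s-1) * (starRingEnd ℂ z)^(k-s-1))

lemma hasFDerivAt_homPoly (k : ℕ) (a : ℕ → ℂ) (z : ℂ) :
    HasFDerivAt (homPoly k a) (clm (D1 k a z) (D2 k a z)) z := by
  have h := key_sum a (fun s => s) (fun s => k - s) (Finset.range (k+1)) z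
  have he : homPoly k a = fun w =>
      ∑ s ∈ Finset.range (k+1), a s * (w ^ s * (starRingEnd ℂ w) ^ (k-s)) := by
    funext w
    exact Finset.sum_congr rfl fun s _ => by ring
  rw [he, D1, D2]
  exact h

lemma wD_homPoly (k : ℕ) (a : ℕ → ℂ) (z : ℂ) : wD (homPoly k a) z = D1 k a z :=
  wD_of_hasFDerivAt (hasFDerivAt_homPoly k a z)

lemma wDbar_homPoly (k : ℕ) (a : ℕ → ℂ) (z : ℂ) : wDbar (homPoly k a) z = D2 k a z :=
  wDbar_of_hasFDerivAt (hasFDerivAt_homPoly k a z)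

lemma wD_D2 (k : ℕ) (a : ℕ → ℂ) (z : ℂ) : wD (fun w => D2 k a w) z = D12 k a z := by
  have h := key_sum (fun s => a s * ((k-s:ℕ):ℂ)) (fun s => s) (fun s => k - s - 1)
    (Finset.range (k+1)) z
  have he : (fun w => D2 k a w) = fun w =>
      ∑ s ∈ Finset.range (k+1), (a s * ((k-s:ℕ):ℂ)) * (w ^ s * (starRingEnd ℂ w) ^ (k-s-1)) := by
    funext w
    rw [D2]
    exact Finset.sum_congr rfl fun s _ => by ring
  rw [he, D12]
  exact wD_of_hasFDerivAt h

noncomputable def gg (k : ℕ) (a : ℕ → ℂ) (z : ℂ) : ℂ :=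
  D1 k a z * D2 k a z - homPoly k a z * D12 k a z

lemma conj_real_mul (t : ℝ) (z : ℂ) :
    starRingEnd ℂ ((t:ℂ) * z) = (t:ℂ) * starRingEnd ℂ z := by
  rw [map_mul, Complex.conj_ofReal]

lemma scale0 (k : ℕ) (a : ℕ → ℂ) (t : ℝ) (z : ℂ) :
    homPoly k a ((t:ℂ) * z) = (t:ℂ)^k * homPoly k a z := by
  rw [homPoly, homPoly, Finset.mul_sum]
  refine Finset.sum_congr rfl fun s hs => ?_
  have hsk : s ≤ k := Nat.lt_succ_iff.mp (Finset.mem_range.mp hs)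
  rw [conj_real_mul, mul_pow, mul_pow]
  have hpow : (t:ℂ)^s * (t:ℂ)^(k-s) = (t:ℂ)^k := by
    rw [← pow_add]; congr 1; omega
  linear_combination (a s * z^s * (starRingEnd ℂ z)^(k-s)) * hpow

lemma scale1 (k : ℕ) (a : ℕ → ℂ) (t : ℝ) (z : ℂ) :
    (t:ℂ) * D1 k a ((t:ℂ) * z) = (t:ℂ)^k * D1 k a z := by
  rw [D1, D1, Finset.mul_sum, Finset.mul_sum]
  refine Finset.sum_congr rfl fun s hs => ?_
  have hsk : s ≤ k := Nat.lt_succ_iff.mp (Finset.mem_range.mp hs)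
  rw [conj_real_mul, mul_pow, mul_pow]
  rcases s with _ | n
  · simp
  · have hpow : (t:ℂ) * (t:ℂ)^(n+1-1) * (t:ℂ)^(k-(n+1)) = (t:ℂ)^k := by
      rw [show n+1-1 = n from rfl, ← pow_succ', ← pow_add]; congr 1; omega
    linear_combination (a (n+1) * ((n+1:ℕ):ℂ) * z^(n+1-1) * (starRingEnd ℂ z)^(k-(n+1))) * hpow

lemma scale2 (k : ℕ) (a : ℕ → ℂ) (t : ℝ) (z : ℂ) :
    (t:ℂ) * D2 k a ((t:ℂ) * z) = (t:ℂ)^k * D2 k a z := by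
  rw [D2, D2, Finset.mul_sum, Finset.mul_sum]
  refine Finset.sum_congr rfl fun s hs => ?_
  have hsk : s ≤ k := Nat.lt_succ_iff.mp (Finset.mem_range.mp hs)
  rw [conj_real_mul, mul_pow, mul_pow]
  rcases hm : k - s with _ | m
  · simp [hm]
  · simp only [hm, Nat.add_sub_cancel]
    have hpow : (t:ℂ) * (t:ℂ)^s * (t:ℂ)^m = (t:ℂ)^k := by
      rw [← pow_succ', ← pow_add]; congr 1; omega
    linear_combination (a s * ((m+1:ℕ):ℂ) * z^s * (starRingEnd ℂ z)^m) * hpow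

lemma scale12 (k : ℕ) (a : ℕ → ℂ) (t : ℝ) (z : ℂ) :
    (t:ℂ)^2 * D12 k a ((t:ℂ) * z) = (t:ℂ)^k * D12 k a z := by
  rw [D12, D12, Finset.mul_sum, Finset.mul_sum]
  refine Finset.sum_congr rfl fun s hs => ?_
  have hsk : s ≤ k := Nat.lt_succ_iff.mp (Finset.mem_range.mp hs)
  rw [conj_real_mul, mul_pow, mul_pow]
  rcases s with _ | n
  · simp
  · rcases hm : k - (n+1) with _ | m
    · simp [hm]
    · simp only [hm, Nat.add_sub_cancel]
      have hpow : (t:ℂ)^2 * (t:ℂ)^n * (t:ℂ)^m = (t:ℂ)^k := by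
        rw [← pow_add, ← pow_add]; congr 1; omega
      linear_combination (a (n+1) * ((m+1:ℕ):ℂ) * ((n+1:ℕ):ℂ) * z^n
        * (starRingEnd ℂ z)^m) * hpow

lemma scaleg (k : ℕ) (a : ℕ → ℂ) (t : ℝ) (z : ℂ) :
    (t:ℂ)^2 * gg k a ((t:ℂ) * z) = (t:ℂ)^(2*k) * gg k a z := by
  have e : (t:ℂ)^2 * gg k a ((t:ℂ) * z)
      = ((t:ℂ) * D1 k a ((t:ℂ)*z)) * ((t:ℂ) * D2 k a ((t:ℂ)*z))
        - homPoly k a ((t:ℂ)*z) * ((t:ℂ)^2 * D12 k a ((t:ℂ)*z)) := by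
    rw [gg]; ring
  rw [e, scale1, scale2, scale0, scale12, gg, two_mul, pow_add]
  ring

lemma gg_continuous (k : ℕ) (a : ℕ → ℂ) : Continuous (gg k a) := by
  have hc : Continuous (fun z : ℂ => starRingEnd ℂ z) := Complex.continuous_conj
  have h1 : Continuous (D1 k a) :=
    continuous_finset_sum _ fun s _ =>
      continuous_const.mul ((continuous_const.mul (continuous_pow _)).mul (hc.pow _))
  have h2 : Continuous (D2 k a) :=
    continuous_finset_sum _ fun s _ =>
      continuous_const.mul ((continuous_const.mul (continuous_pow _)).mul (hc.pow _))
  have h12 : Continuous (D12 k a) :=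
    continuous_finset_sum _ fun s _ =>
      continuous_const.mul ((continuous_const.mul (continuous_pow _)).mul (hc.pow _))
  have h0 : Continuous (homPoly k a) :=
    continuous_finset_sum _ fun s _ =>
      (continuous_const.mul (continuous_pow _)).mul (hc.pow _)
  exact (h1.mul h2).sub (h0.mul h12)

lemma step1 (k : ℕ) (a : ℕ → ℂ)
    (c₁ : ℝ) (hc₁ : 0 < c₁)
    (hbound : ∀ z : ℂ, 0 < ‖z‖ → ‖z‖ < 1 → homPoly k a z ≠ 0 →
      ‖gg k a z‖ ≤ c₁ * (homPoly k a z).re ^ 2 /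
        (‖z‖ ^ 2 * (Real.log (1 / ‖z‖)) ^ 2))
    (z : ℂ) (hz0 : z ≠ 0) (hfz : homPoly k a z ≠ 0) : gg k a z = 0 := by
  by_contra hg
  set M := ‖gg k a z‖ with hM
  have hM0 : 0 < M := norm_pos_iff.mpr hg
  have habsz : 0 < ‖z‖ := norm_pos_iff.mpr hz0
  set C := c₁ * (homPoly k a z).re ^ 2 / ‖z‖ ^ 2 with hCdef
  have hC0 : 0 ≤ C := by positivity
  set R := max 1 (Real.sqrt (C / M) + 1) with hR
  have hR1 : (1:ℝ) ≤ R := le_max_left _ _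
  have hR0 : 0 < R := by linarith
  have hRsq : C / M < R^2 := by
    have h1 : Real.sqrt (C/M) + 1 ≤ R := le_max_right _ _
    have h2 : Real.sqrt (C/M) < R := by linarith
    have h3 := Real.sq_sqrt (by positivity : (0:ℝ) ≤ C/M)
    nlinarith [Real.sqrt_nonneg (C/M)]
  set t := Real.exp (-R) / ‖z‖ with ht
  have ht0 : 0 < t := by positivity
  have habs_tz : ‖(t:ℂ) * z‖ = Real.exp (-R) := by
    rw [norm_mul, Complex.norm_real, Real.norm_eq_abs, abs_of_pos ht0, ht]
    field_simp
  have hlt1 : ‖(t:ℂ)*z‖ < 1 := by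
    rw [habs_tz]
    exact Real.exp_lt_one_iff.mpr (by linarith)
  have hpos' : 0 < ‖(t:ℂ)*z‖ := by rw [habs_tz]; positivity
  have hlog : Real.log (1 / ‖(t:ℂ)*z‖) = R := by
    rw [habs_tz, one_div, ← Real.exp_neg, Real.log_exp, neg_neg]
  have hf_tz : homPoly k a ((t:ℂ)*z) = (t:ℂ)^k * homPoly k a z := scale0 k a t z
  have hfne : homPoly k a ((t:ℂ)*z) ≠ 0 := by
    rw [hf_tz]
    exact mul_ne_zero (pow_ne_zero _ (by exact_mod_cast ht0.ne')) hfz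
  have hb := hbound _ hpos' hlt1 hfne
  have hre : (homPoly k a ((t:ℂ)*z)).re = t^k * (homPoly k a z).re := by
    rw [hf_tz, ← Complex.ofReal_pow, Complex.re_ofReal_mul]
  have hgabs : t^2 * ‖gg k a ((t:ℂ)*z)‖ = t^(2*k) * M := by
    have h := congrArg norm (scaleg k a t z)
    rwa [norm_mul, norm_mul, norm_pow, norm_pow, Complex.norm_real, Real.norm_eq_abs, abs_of_pos ht0, ← hM] at h
  rw [hlog, hre, habs_tz] at hb
  have hexp : Real.exp (-R) = t * ‖z‖ := by rw [ht]; field_simp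
  rw [hexp] at hb
  have hMle : M ≤ C / R^2 := by
    have h2 : t^(2*k) * M ≤ t^2 * (c₁ * (t ^ k * (homPoly k a z).re) ^ 2 /
        ((t * ‖z‖) ^ 2 * R ^ 2)) := by
      rw [← hgabs]
      exact mul_le_mul_of_nonneg_left hb (by positivity)
    have h3 : t^2 * (c₁ * (t ^ k * (homPoly k a z).re) ^ 2 / ((t * ‖z‖) ^ 2 * R ^ 2))
        = t^(2*k) * (C / R^2) := by
      rw [hCdef]
      field_simp
      ring
    rw [h3] at h2
    exact le_of_mul_le_mul_left h2 (by positivity)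
  have hlt : C / R^2 < M := by
    have h4 := mul_lt_mul_of_pos_right hRsq hM0
    rw [div_mul_cancel₀ _ hM0.ne'] at h4
    rw [div_lt_iff₀ (by positivity : (0:ℝ) < R^2)]
    linarith
  linarith

theorem stmt_13 (k : ℕ) (a : ℕ → ℂ)
    (hreal : ∀ z : ℂ, (homPoly k a z).im = 0)
    (hpos : ∀ z : ℂ, 0 ≤ (homPoly k a z).re)
    (hne : ∃ z : ℂ, homPoly k a z ≠ 0)
    (c₁ : ℝ) (hc₁ : 0 < c₁)
    (hbound : ∀ z : ℂ, 0 < ‖z‖ → ‖z‖ < 1 → homPoly k a z ≠ 0 →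
      ‖wD (homPoly k a) z * wDbar (homPoly k a) z
          - homPoly k a z * wD (fun w : ℂ => wDbar (homPoly k a) w) z‖
        ≤ c₁ * (homPoly k a z).re ^ 2 /
            (‖z‖ ^ 2 * (Real.log (1 / ‖z‖)) ^ 2)) :
    ∀ z : ℂ,
      wD (homPoly k a) z * wDbar (homPoly k a) z
        - homPoly k a z * wD (fun w : ℂ => wDbar (homPoly k a) w) z = 0 := by
  have hexprg : ∀ w : ℂ, wD (homPoly k a) w * wDbar (homPoly k a) w
      - homPoly k a w * wD (fun u : ℂ => wDbar (homPoly k a) u) w = gg k a w := by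
    intro w
    have h2 : (fun u : ℂ => wDbar (homPoly k a) u) = fun u => D2 k a u :=
      funext (wDbar_homPoly k a)
    rw [wD_homPoly, wDbar_homPoly, h2, wD_D2, gg]
  have hbound' : ∀ w : ℂ, 0 < ‖w‖ → ‖w‖ < 1 → homPoly k a w ≠ 0 →
      ‖gg k a w‖ ≤ c₁ * (homPoly k a w).re ^ 2 /
        (‖w‖ ^ 2 * (Real.log (1 / ‖w‖)) ^ 2) := by
    intro w h1 h2 h3
    rw [← hexprg w]
    exact hbound w h1 h2 h3
  intro z
  rw [hexprg z]
  rcases Nat.eq_zero_or_pos k with hk | hk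
  · subst hk
    simp [gg, D1, D12, Finset.sum_range_one]
  · have hF0 : homPoly k a 0 = 0 := by
      rw [homPoly]
      refine Finset.sum_eq_zero fun s hs => ?_
      rcases Nat.eq_zero_or_pos s with rfl | hs0
      · simp [zero_pow hk.ne']
      · simp [zero_pow hs0.ne']
    by_cases hfz : homPoly k a z = 0
    · obtain ⟨z₁, hz₁⟩ := hne
      set w := z₁ - z with hw
      set P : Polynomial ℂ := ∑ s ∈ Finset.range (k+1), Polynomial.C (a s) *
        (Polynomial.C z + Polynomial.C w * Polynomial.X)^s *
        (Polynomial.C (starRingEnd ℂ z) + Polynomial.C (starRingEnd ℂ w) * Polynomial.X)^(k-s)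
        with hPdef
      have heval : ∀ t : ℝ, P.eval (t:ℂ) = homPoly k a (z + (t:ℂ)*w) := by
        intro t
        rw [hPdef, Polynomial.eval_finset_sum, homPoly]
        refine Finset.sum_congr rfl fun s _ => ?_
        have hconj : starRingEnd ℂ (z + (t:ℂ)*w) = starRingEnd ℂ z + (t:ℂ) * starRingEnd ℂ w := by
          rw [map_add, map_mul, Complex.conj_ofReal]
        simp only [Polynomial.eval_mul, Polynomial.eval_add, Polynomial.eval_pow,
          Polynomial.eval_C, Polynomial.eval_X, hconj]
        ring
      have hP : P ≠ 0 := by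
        intro h0
        apply hz₁
        have h1 := heval 1
        rw [h0] at h1
        simpa [hw, add_sub_cancel] using h1.symm
      have hTfin : ((fun t : ℝ => (t:ℂ)) ⁻¹' {x : ℂ | P.IsRoot x}).Finite :=
        Set.Finite.preimage (Complex.ofReal_injective.injOn)
          (Polynomial.finite_setOf_isRoot hP)
      have hev : ∀ᶠ t : ℝ in nhdsWithin (0:ℝ) (Set.Ioi 0), gg k a (z + (t:ℂ)*w) = 0 := by
        set T : Set ℝ := (fun t : ℝ => (t:ℂ)) ⁻¹' {x : ℂ | P.IsRoot x} with hT
        have hcl : IsClosed (T \ {0}) := hTfin.diff.isClosed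
        have h0n : (0:ℝ) ∉ T \ {0} := fun h => h.2 rfl
        have hnh : ∀ᶠ t in nhds (0:ℝ), t ∉ (T \ {0}) :=
          hcl.isOpen_compl.mem_nhds h0n
        filter_upwards [eventually_nhdsWithin_of_eventually_nhds hnh, self_mem_nhdsWithin]
          with t htn ht0
        have htne : P.eval (t:ℂ) ≠ 0 := by
          intro h
          exact htn ⟨h, by simpa using (ht0 : (0:ℝ) < t).ne'⟩

        have hfne : homPoly k a (z + (t:ℂ)*w) ≠ 0 := by rw [← heval t]; exact htne
        have hzne : z + (t:ℂ)*w ≠ 0 := fun h => hfne (h ▸ hF0)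
        exact step1 k a c₁ hc₁ hbound' _ hzne hfne
      have htend : Filter.Tendsto (fun t : ℝ => gg k a (z + (t:ℂ)*w))
          (nhdsWithin 0 (Set.Ioi 0)) (nhds (gg k a z)) := by
        have hcont : Continuous (fun t : ℝ => gg k a (z + (t:ℂ)*w)) :=
          (gg_continuous k a).comp (by continuity)
        have h := hcont.tendsto 0
        simp only [Complex.ofReal_zero, zero_mul, add_zero] at h
        exact h.mono_left nhdsWithin_le_nhds
      exact tendsto_nhds_unique (htend.congr' hev) tendsto_const_nhds
    · have hz0 : z ≠ 0 := fun h => hfz (h ▸ hF0)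
      exact step1 k a c₁ hc₁ hbound' z hz0 hfz
end

section
/- Let f : ℂ → ℝ be a degree k homogeneous polynomial of z and z̄ (i.e., f(z) = ∑_{s=0}^{k} a_s z^s conj(z)^{k−s}, real-valued), with f(z) ≥ 0 for all z and f not identically zero. Suppose there is a constant c₁ > 0 such that for every z with 0 < |z| < 1 and f(z) ≠ 0, −c₁ / ( |z|² (log(1/|z|))² ) ≤ −∂_z ∂̄_z (log f)(z) ≤ c₁ / ( |z|² (log(1/|z|))² ). Then k = 2l is an even integer and f(z) = c·|z|^k for some constant c > 0. -/
open Complex Finset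

noncomputable def mkD (u v : ℂ) : ℂ →L[ℝ] ℂ :=
  u • (1 : ℂ →L[ℝ] ℂ) + v • (Complex.conjCLE.toContinuousLinearMap)

lemma mkD_apply (u v w : ℂ) : mkD u v w = u * w + v * (starRingEnd ℂ) w := by
  simp [mkD, Complex.real_smul]

lemma clm_ext {T S : ℂ →L[ℝ] ℂ} (h1 : T 1 = S 1) (hI : T Complex.I = S Complex.I) : T = S := by
  ext z
  have hz : z = z.re • (1:ℂ) + z.im • Complex.I := by
    simp [Complex.real_smul]
  rw [hz, map_add, map_add, map_smul, map_smul, map_smul, map_smul, h1, hI]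

def WirtAt (f : ℂ → ℂ) (u v : ℂ) (z : ℂ) : Prop := HasFDerivAt f (mkD u v) z

lemma WirtAt.wD_eq {f : ℂ → ℂ} {u v z : ℂ} (h : WirtAt f u v z) : wD f z = u := by
  rw [wD, h.fderiv, mkD_apply, mkD_apply]
  simp
  ring_nf
  simp [Complex.I_sq]
  ring

lemma WirtAt.wDbar_eq {f : ℂ → ℂ} {u v z : ℂ} (h : WirtAt f u v z) : wDbar f z = v := by
  rw [wDbar, h.fderiv, mkD_apply, mkD_apply]
  simp
  ring_nf
  simp [Complex.I_sq]
  ring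


lemma wirtAt_const (c z : ℂ) : WirtAt (fun _ => c) 0 0 z := by
  have : mkD 0 0 = 0 := by apply clm_ext <;> simp [mkD_apply]
  rw [WirtAt, this]; exact hasFDerivAt_const c z

lemma wirtAt_pow (p : ℕ) (z : ℂ) :
    WirtAt (fun w => w ^ p) ((p:ℂ) * z ^ (p-1)) 0 z := by
  have h := (hasDerivAt_pow p z).hasFDerivAt.restrictScalars ℝ
  have he : (ContinuousLinearMap.smulRight (1 : ℂ →L[ℂ] ℂ) ((p:ℂ) * z ^ (p-1))).restrictScalars ℝ
      = mkD ((p:ℂ) * z ^ (p-1)) 0 := by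
    apply clm_ext <;> simp [mkD_apply] <;> ring
  rw [WirtAt, ← he]; exact h

lemma wirtAt_conj_pow (q : ℕ) (z : ℂ) :
    WirtAt (fun w => (starRingEnd ℂ w) ^ q) 0 ((q:ℂ) * (starRingEnd ℂ z) ^ (q-1)) z := by
  have hc : HasFDerivAt (fun w : ℂ => starRingEnd ℂ w) (Complex.conjCLE.toContinuousLinearMap) z :=
    Complex.conjCLE.hasFDerivAt
  have h := ((hasDerivAt_pow q (starRingEnd ℂ z)).hasFDerivAt.restrictScalars ℝ).comp z hc
  have he : ((ContinuousLinearMap.smulRight (1 : ℂ →L[ℂ] ℂ)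
        ((q:ℂ) * (starRingEnd ℂ z) ^ (q-1))).restrictScalars ℝ).comp
        (Complex.conjCLE.toContinuousLinearMap)
      = mkD 0 ((q:ℂ) * (starRingEnd ℂ z) ^ (q-1)) := by
    apply clm_ext <;> simp [mkD_apply] <;> ring
  rw [WirtAt, ← he]; exact h

lemma WirtAt.mul {f g : ℂ → ℂ} {u v p q z : ℂ} (hf : WirtAt f u v z) (hg : WirtAt g p q z) :
    WirtAt (fun w => f w * g w) (f z * p + g z * u) (f z * q + g z * v) z := by
  have h := HasFDerivAt.mul hf hg
  have he : f z • mkD p q + g z • mkD u v = mkD (f z * p + g z * u) (f z * q + g z * v) := by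
    apply clm_ext <;> simp [mkD_apply, smul_eq_mul] <;> ring
  rw [WirtAt, ← he]; exact h

lemma wirtAt_sum {n : ℕ} {F : ℕ → ℂ → ℂ} {U V : ℕ → ℂ} {z : ℂ}
    (h : ∀ s ∈ range n, WirtAt (F s) (U s) (V s) z) :
    WirtAt (fun w => ∑ s ∈ range n, F s w) (∑ s ∈ range n, U s) (∑ s ∈ range n, V s) z := by
  have he : (∑ s ∈ range n, mkD (U s) (V s)) = mkD (∑ s ∈ range n, U s) (∑ s ∈ range n, V s) := by
    apply clm_ext <;>
      simp [mkD_apply, Finset.sum_apply, Finset.sum_mul, Finset.sum_add_distrib, Finset.sum_sub_distrib, sub_eq_add_neg, Finset.sum_neg_distrib]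
  rw [WirtAt, ← he]
  exact HasFDerivAt.fun_sum h

lemma WirtAt.compHolo {f : ℂ → ℂ} {u v z d : ℂ} {g : ℂ → ℂ}
    (hf : WirtAt f u v z) (hg : HasDerivAt g d (f z)) :
    WirtAt (fun w => g (f w)) (d * u) (d * v) z := by
  have h := (hg.hasFDerivAt.restrictScalars ℝ).comp z hf
  have he : ((ContinuousLinearMap.smulRight (1 : ℂ →L[ℂ] ℂ) d).restrictScalars ℝ).comp (mkD u v)
      = mkD (d * u) (d * v) := by
    apply clm_ext <;> simp [mkD_apply] <;> ring
  rw [WirtAt, ← he]; exact h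

lemma wirtAt_monomial (c : ℂ) (p q : ℕ) (z : ℂ) :
    WirtAt (fun w => c * w ^ p * (starRingEnd ℂ w) ^ q)
      (c * p * z ^ (p-1) * (starRingEnd ℂ z) ^ q)
      (c * q * z ^ p * (starRingEnd ℂ z) ^ (q-1)) z := by
  have h := ((wirtAt_const c z).mul (wirtAt_pow p z)).mul (wirtAt_conj_pow q z)
  convert h using 1 <;> ring

lemma wirtAt_poly (c : ℕ → ℂ) (e1 e2 : ℕ → ℕ) (n : ℕ) (z : ℂ) :
    WirtAt (fun w => ∑ s ∈ range n, c s * w ^ (e1 s) * (starRingEnd ℂ w) ^ (e2 s))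
      (∑ s ∈ range n, c s * (e1 s) * z ^ (e1 s - 1) * (starRingEnd ℂ z) ^ (e2 s))
      (∑ s ∈ range n, c s * (e2 s) * z ^ (e1 s) * (starRingEnd ℂ z) ^ (e2 s - 1)) z := by
  exact wirtAt_sum (fun s _ => wirtAt_monomial (c s) (e1 s) (e2 s) z)

noncomputable def pfz (k : ℕ) (a : ℕ → ℂ) (z : ℂ) : ℂ :=
  ∑ s ∈ range (k+1), a s * s * z ^ (s-1) * (starRingEnd ℂ z) ^ (k-s)

noncomputable def pfzb (k : ℕ) (a : ℕ → ℂ) (z : ℂ) : ℂ :=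
  ∑ s ∈ range (k+1), a s * (k-s : ℕ) * z ^ s * (starRingEnd ℂ z) ^ (k-s-1)

noncomputable def pfzzb (k : ℕ) (a : ℕ → ℂ) (z : ℂ) : ℂ :=
  ∑ s ∈ range (k+1), (a s * (k-s : ℕ)) * s * z ^ (s-1) * (starRingEnd ℂ z) ^ (k-s-1)

noncomputable def pfzbb (k : ℕ) (a : ℕ → ℂ) (z : ℂ) : ℂ :=
  ∑ s ∈ range (k+1), (a s * (k-s : ℕ)) * (k-s-1 : ℕ) * z ^ s * (starRingEnd ℂ z) ^ (k-s-1-1)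

lemma wirtAt_homPoly (k : ℕ) (a : ℕ → ℂ) (z : ℂ) :
    WirtAt (homPoly k a) (pfz k a z) (pfzb k a z) z := by
  have h := wirtAt_poly a id (fun s => k - s) (k+1) z
  exact h

lemma wirtAt_pfzb (k : ℕ) (a : ℕ → ℂ) (z : ℂ) :
    WirtAt (pfzb k a) (pfzzb k a z) (pfzbb k a z) z := by
  have h := wirtAt_poly (fun s => a s * (k-s:ℕ)) id (fun s => k - s - 1) (k+1) z
  exact h

lemma continuous_homPoly (k : ℕ) (a : ℕ → ℂ) : Continuous (homPoly k a) := by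
  unfold homPoly
  exact continuous_finset_sum _ (fun s _ => by
    exact ((continuous_const.mul (continuous_pow s)).mul ((Complex.continuous_conj).pow _)))

lemma key_formula (k : ℕ) (a : ℕ → ℂ) (hreal : ∀ z : ℂ, (homPoly k a z).im = 0)
    (z : ℂ) (hz : 0 < (homPoly k a z).re) :
    wD (fun w => wDbar (fun y => ((Real.log ((homPoly k a y).re) : ℝ) : ℂ)) w) z
      = (homPoly k a z * pfzzb k a z - pfz k a z * pfzb k a z) / (homPoly k a z)^2 := by
  set f := homPoly k a with hf
  have hU : IsOpen {w : ℂ | 0 < (f w).re} :=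
    (isOpen_lt continuous_const (Complex.continuous_re.comp (continuous_homPoly k a)))
  have hcoe : ∀ w : ℂ, f w = ((f w).re : ℂ) := fun w => by
    apply Complex.ext <;> simp [hreal w]
  have hne0 : ∀ w : ℂ, 0 < (f w).re → f w ≠ 0 := fun w hw h0 => by
    rw [h0] at hw; simp at hw
  -- inner equality on U
  have hinner : ∀ w ∈ {w : ℂ | 0 < (f w).re},
      wDbar (fun y => ((Real.log ((f y).re) : ℝ) : ℂ)) w = (f w)⁻¹ * pfzb k a w := by
    intro w hw
    have hsp : f w ∈ Complex.slitPlane := Or.inl hw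
    have hlog : WirtAt (fun y => Complex.log (f y))
        ((f w)⁻¹ * pfz k a w) ((f w)⁻¹ * pfzb k a w) w :=
      (wirtAt_homPoly k a w).compHolo (Complex.hasDerivAt_log hsp)
    have heq : (fun y => ((Real.log ((f y).re) : ℝ) : ℂ)) =ᶠ[nhds w] (fun y => Complex.log (f y)) := by
      filter_upwards [hU.mem_nhds hw] with y hy
      rw [Complex.ofReal_log (le_of_lt hy), ← hcoe y]
    rw [wDbar, heq.fderiv_eq, ← wDbar]
    exact hlog.wDbar_eq
  have houter : (fun w => wDbar (fun y => ((Real.log ((f y).re) : ℝ) : ℂ)) w)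
      =ᶠ[nhds z] (fun w => (f w)⁻¹ * pfzb k a w) := by
    filter_upwards [hU.mem_nhds hz] with w hw
    exact hinner w hw
  have hG : WirtAt (fun w => (f w)⁻¹ * pfzb k a w)
      ((f z)⁻¹ * pfzzb k a z + pfzb k a z * (-((f z) ^ 2)⁻¹ * pfz k a z))
      ((f z)⁻¹ * pfzbb k a z + pfzb k a z * (-((f z) ^ 2)⁻¹ * pfzb k a z)) z := by
    have hinv : WirtAt (fun w => (f w)⁻¹)
        (-((f z) ^ 2)⁻¹ * pfz k a z) (-((f z) ^ 2)⁻¹ * pfzb k a z) z :=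
      (wirtAt_homPoly k a z).compHolo (hasDerivAt_inv (hne0 z hz))
    exact hinv.mul (wirtAt_pfzb k a z)
  rw [wD, houter.fderiv_eq, ← wD, hG.wD_eq]
  have h0 : f z ≠ 0 := hne0 z hz
  field_simp
  ring


lemma coeff_vanish (n : ℕ) (b : ℕ → ℂ) (z₀ : ℂ) (hz₀ : z₀ ≠ 0) (δ : ℝ) (hδ : 0 < δ) (hδ1 : δ ≤ 1)
    (h : ∀ θ ∈ Set.Ioo (-δ) δ,
      ∑ m ∈ range (n+1), b m * (z₀ * Complex.exp (θ * Complex.I)) ^ m *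
        (starRingEnd ℂ (z₀ * Complex.exp (θ * Complex.I))) ^ (n - m) = 0) :
    ∀ m ∈ range (n+1), b m = 0 := by
  set q : Polynomial ℂ :=
    ∑ m ∈ range (n+1), Polynomial.C (b m * z₀ ^ m * (starRingEnd ℂ z₀) ^ (n-m)) * Polynomial.X ^ m
    with hq
  have heval : ∀ w : ℂ, q.eval w = ∑ m ∈ range (n+1), b m * z₀ ^ m * (starRingEnd ℂ z₀) ^ (n-m) * w ^ m := by
    intro w
    rw [hq, Polynomial.eval_finset_sum]
    simp
  have hroot : ∀ θ ∈ Set.Ioo (-δ) δ, q.IsRoot (Complex.exp (2 * θ * Complex.I)) := by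
    intro θ hθ
    have hsum := h θ hθ
    have key : q.eval (Complex.exp (2 * θ * Complex.I)) =
        Complex.exp (n * θ * Complex.I) *
        ∑ m ∈ range (n+1), b m * (z₀ * Complex.exp (θ * Complex.I)) ^ m *
          (starRingEnd ℂ (z₀ * Complex.exp (θ * Complex.I))) ^ (n - m) := by
      rw [heval, Finset.mul_sum]
      apply Finset.sum_congr rfl
      intro m hm
      have hmn : m ≤ n := by
        have := Finset.mem_range.mp hm; omega
      have hconj : starRingEnd ℂ (Complex.exp ((θ:ℂ) * Complex.I)) = Complex.exp (-(θ:ℂ) * Complex.I) := by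
        rw [← Complex.exp_conj]
        congr 1
        simp [Complex.ext_iff]
      rw [map_mul, hconj, mul_pow, mul_pow]
      have hexp : ∀ (c : ℂ) (j : ℕ), (Complex.exp (c * Complex.I)) ^ j = Complex.exp ((j : ℂ) * c * Complex.I) := by
        intro c j
        rw [← Complex.exp_nat_mul]; ring_nf
      rw [hexp, hexp, hexp]
      have harg : Complex.exp ((m:ℂ) * (2 * (θ:ℂ)) * Complex.I) = Complex.exp ((n:ℂ) * θ * Complex.I) *
          (Complex.exp ((m:ℂ) * θ * Complex.I) * Complex.exp (((n-m : ℕ):ℂ) * -(θ:ℂ) * Complex.I)) := by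
        rw [← Complex.exp_add, ← Complex.exp_add]
        congr 1
        push_cast [Nat.cast_sub hmn]
        ring
      rw [harg]
      ring
    rw [Polynomial.IsRoot, key, hsum, mul_zero]
  have hinj : Set.InjOn (fun θ : ℝ => Complex.exp (2 * θ * Complex.I)) (Set.Ioo (-δ) δ) := by
    intro x hx y hy hxy
    simp only at hxy
    rw [Complex.exp_eq_exp_iff_exists_int] at hxy
    obtain ⟨j, hj⟩ := hxy
    have him : 2 * x = 2 * y + j * (2 * Real.pi) := by
      have := congrArg Complex.im hj
      simpa using this
    have hπ := Real.pi_gt_three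
    rcases hx with ⟨hx1, hx2⟩; rcases hy with ⟨hy1, hy2⟩
    have hj0 : j = 0 := by
      by_contra hj0
      have h1 : (1 : ℝ) ≤ |(j:ℝ)| := by
        have := Int.one_le_abs hj0
        exact_mod_cast this
      have hjr : 2*x - 2*y = (j:ℝ) * (2*Real.pi) := by linarith
      have hb : |2*x - 2*y| < 4 := by
        rw [abs_lt]; constructor <;> linarith
      have h2pi : |(2*Real.pi)| = 2*Real.pi := _root_.abs_of_nonneg (by positivity)
      have habs : |2*x - 2*y| = |(j:ℝ)| * (2*Real.pi) := by
        rw [hjr, abs_mul, h2pi]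
      nlinarith
    rw [hj0] at him
    push_cast at him
    linarith
  have hinf : {x : ℂ | q.IsRoot x}.Infinite := by
    apply Set.Infinite.mono (s := (fun θ : ℝ => Complex.exp (2 * θ * Complex.I)) '' (Set.Ioo (-δ) δ))
    · rintro _ ⟨θ, hθ, rfl⟩
      exact hroot θ hθ
    · exact Set.Infinite.image hinj (Set.Ioo_infinite (by linarith))
  have hq0 : q = 0 := Polynomial.eq_zero_of_infinite_isRoot q hinf
  intro m hm
  have hcoeff : q.coeff m = b m * z₀ ^ m * (starRingEnd ℂ z₀) ^ (n-m) := by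
    rw [hq, Polynomial.finset_sum_coeff]
    simp only [Polynomial.coeff_C_mul, Polynomial.coeff_X_pow]
    rw [Finset.sum_eq_single m]
    · simp
    · intro j _ hj
      simp [hj]
      intro hj'; exact absurd hj'.symm hj
    · intro hmm; exact absurd hm hmm
  rw [hq0] at hcoeff
  simp at hcoeff
  rcases hcoeff with ((h1 | ⟨h2, -⟩) | ⟨h2, -⟩)
  · exact h1
  · exact absurd h2 hz₀
  · exact absurd h2 hz₀


-- per-pair identity
lemma pair_id (k : ℕ) (a : ℕ → ℂ) (z : ℂ) (s t : ℕ) (hs : s ≤ k) (ht : t ≤ k) :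
    (a s * z^s * (starRingEnd ℂ z)^(k-s)) * ((a t * ((k-t:ℕ):ℂ)) * (t:ℂ) * z^(t-1) * (starRingEnd ℂ z)^(k-t-1))
    - (a s * (s:ℂ) * z^(s-1) * (starRingEnd ℂ z)^(k-s)) * (a t * ((k-t:ℕ):ℂ) * z^t * (starRingEnd ℂ z)^(k-t-1))
    = a s * a t * ((k-t:ℕ):ℂ) * ((t:ℂ) - (s:ℂ)) * z^(s+t-1) * (starRingEnd ℂ z)^(2*k-s-t-1) := by
  set w := starRingEnd ℂ z with hw
  by_cases htk : t = k
  · subst htk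
    simp [Nat.sub_self]
  · have htk' : t < k := lt_of_le_of_ne ht htk
    by_cases ht0 : t = 0
    · subst ht0
      by_cases hs0 : s = 0
      · subst hs0; simp
      · have h1 : w^(k-s) * w^(k-0-1) = w^(2*k-s-0-1) := by
          rw [← pow_add]; congr 1; omega
        have h2 : z^(s+0-1) = z^(s-1) := by
          congr 1
        rw [h2, ← h1]
        push_cast
        ring
    · by_cases hs0 : s = 0
      · subst hs0
        have h1 : w^(k-0) * w^(k-t-1) = w^(2*k-0-t-1) := by
          rw [← pow_add]; congr 1; omega
        have h2 : z^(0+t-1) = z^(t-1) := by norm_num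
        simp only [Nat.cast_zero, mul_zero, zero_mul, sub_zero, zero_sub]
        rw [← h1, h2]
        ring
      · have h1 : w^(k-s) * w^(k-t-1) = w^(2*k-s-t-1) := by
          rw [← pow_add]; congr 1; omega
        have h2 : z^s * z^(t-1) = z^(s+t-1) := by
          rw [← pow_add]; congr 1; omega
        have h3 : z^(s-1) * z^t = z^(s+t-1) := by
          rw [← pow_add]; congr 1; omega
        calc (a s * z^s * w^(k-s)) * ((a t * ((k-t:ℕ):ℂ)) * (t:ℂ) * z^(t-1) * w^(k-t-1))
            - (a s * (s:ℂ) * z^(s-1) * w^(k-s)) * (a t * ((k-t:ℕ):ℂ) * z^t * w^(k-t-1))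
            = a s * a t * ((k-t:ℕ):ℂ) * (t:ℂ) * (z^s * z^(t-1)) * (w^(k-s) * w^(k-t-1))
              - a s * a t * ((k-t:ℕ):ℂ) * (s:ℂ) * (z^(s-1) * z^t) * (w^(k-s) * w^(k-t-1)) := by ring
        _ = a s * a t * ((k-t:ℕ):ℂ) * ((t:ℂ) - (s:ℂ)) * z^(s+t-1) * w^(2*k-s-t-1) := by
              rw [h1, h2, h3]; ring

noncomputable def NN (k : ℕ) (a : ℕ → ℂ) (z : ℂ) : ℂ :=
  homPoly k a z * pfzzb k a z - pfz k a z * pfzb k a z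

noncomputable def DD (k : ℕ) (a : ℕ → ℂ) (m : ℕ) : ℂ :=
  ∑ p ∈ (range (k+1) ×ˢ range (k+1)).filter (fun p => p.1 + p.2 = m),
    a p.1 * a p.2 * ((k - p.2 : ℕ):ℂ) * ((p.2:ℂ) - (p.1:ℂ))

lemma NN_eq (k : ℕ) (a : ℕ → ℂ) (z : ℂ) :
    NN k a z = ∑ m ∈ range (2*k+1), DD k a m * z^(m-1) * (starRingEnd ℂ z)^(2*k-m-1) := by
  have step1 : NN k a z = ∑ p ∈ range (k+1) ×ˢ range (k+1),
      (a p.1 * a p.2 * ((k - p.2 : ℕ):ℂ) * ((p.2:ℂ) - (p.1:ℂ)) * z^(p.1+p.2-1)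
        * (starRingEnd ℂ z)^(2*k-p.1-p.2-1)) := by
    rw [NN, homPoly, pfzzb, pfz, pfzb, Finset.sum_mul_sum, Finset.sum_mul_sum,
      ← Finset.sum_sub_distrib]
    rw [Finset.sum_product]
    apply Finset.sum_congr rfl
    intro s hs
    rw [← Finset.sum_sub_distrib]
    apply Finset.sum_congr rfl
    intro t ht
    exact pair_id k a z s t (by simpa using Nat.lt_succ_iff.mp (Finset.mem_range.mp hs))
      (by simpa using Nat.lt_succ_iff.mp (Finset.mem_range.mp ht))
  rw [step1, ← Finset.sum_fiberwise_of_maps_to (g := fun p : ℕ × ℕ => p.1 + p.2) (t := range (2*k+1))]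
  · apply Finset.sum_congr rfl
    intro m hm
    rw [DD, Finset.sum_mul, Finset.sum_mul]
    apply Finset.sum_congr rfl
    intro p hp
    have hpm : p.1 + p.2 = m := (Finset.mem_filter.mp hp).2
    rw [show 2*k - p.1 - p.2 - 1 = 2*k - m - 1 from by omega, hpm]
  · intro p hp
    rw [Finset.mem_range]
    rw [Finset.mem_product, Finset.mem_range, Finset.mem_range] at hp
    omega

lemma DD_zero (k : ℕ) (a : ℕ → ℂ) : DD k a 0 = 0 := by
  apply Finset.sum_eq_zero
  intro p hp
  have h := (Finset.mem_filter.mp hp).2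
  have h1 : p.1 = 0 := by omega
  have h2 : p.2 = 0 := by omega
  rw [h1, h2]; simp

lemma DD_top (k : ℕ) (a : ℕ → ℂ) : DD k a (2*k) = 0 := by
  apply Finset.sum_eq_zero
  intro p hp
  have h := Finset.mem_filter.mp hp
  have hm := Finset.mem_product.mp h.1
  have h1 := Finset.mem_range.mp hm.1
  have h2 := Finset.mem_range.mp hm.2
  have hp2 : p.2 = k := by omega
  rw [hp2]; simp

lemma homPoly_smul (k : ℕ) (a : ℕ → ℂ) (lam : ℝ) (z : ℂ) :
    homPoly k a ((lam:ℂ) * z) = (lam:ℂ)^k * homPoly k a z := by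
  rw [homPoly, homPoly, Finset.mul_sum]
  apply Finset.sum_congr rfl
  intro s hs
  have hsk : s ≤ k := by have := Finset.mem_range.mp hs; omega
  rw [map_mul, Complex.conj_ofReal, mul_pow, mul_pow]
  have : ((lam:ℂ))^s * ((lam:ℂ))^(k-s) = (lam:ℂ)^k := by
    rw [← pow_add]; congr 1; omega
  calc a s * ((lam:ℂ)^s * z^s) * ((lam:ℂ)^(k-s) * (starRingEnd ℂ z)^(k-s))
      = ((lam:ℂ)^s * (lam:ℂ)^(k-s)) * (a s * z^s * (starRingEnd ℂ z)^(k-s)) := by ring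
  _ = (lam:ℂ)^k * (a s * z^s * (starRingEnd ℂ z)^(k-s)) := by rw [this]

lemma NN_smul (k : ℕ) (a : ℕ → ℂ) (lam : ℝ) (z : ℂ) :
    NN k a ((lam:ℂ) * z) = (lam:ℂ)^(2*k-2) * NN k a z := by
  rw [NN_eq, NN_eq, Finset.mul_sum]
  apply Finset.sum_congr rfl
  intro m hm
  have hm' : m ≤ 2*k := by have := Finset.mem_range.mp hm; omega
  by_cases h0 : m = 0
  · rw [h0, DD_zero]; simp
  by_cases htop : m = 2*k
  · rw [htop, DD_top]; simp
  rw [map_mul, Complex.conj_ofReal, mul_pow, mul_pow]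
  have : ((lam:ℂ))^(m-1) * ((lam:ℂ))^(2*k-m-1) = (lam:ℂ)^(2*k-2) := by
    rw [← pow_add]; congr 1; omega
  calc DD k a m * ((lam:ℂ)^(m-1) * z^(m-1)) * ((lam:ℂ)^(2*k-m-1) * (starRingEnd ℂ z)^(2*k-m-1))
      = ((lam:ℂ)^(m-1) * (lam:ℂ)^(2*k-m-1)) * (DD k a m * z^(m-1) * (starRingEnd ℂ z)^(2*k-m-1)) := by
        ring
  _ = (lam:ℂ)^(2*k-2) * (DD k a m * z^(m-1) * (starRingEnd ℂ z)^(2*k-m-1)) := by rw [this]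

lemma fpos_of_ne (k : ℕ) (a : ℕ → ℂ) (hreal : ∀ z : ℂ, (homPoly k a z).im = 0)
    (hpos : ∀ z : ℂ, 0 ≤ (homPoly k a z).re) (x : ℂ) (hx : homPoly k a x ≠ 0) :
    0 < (homPoly k a x).re := by
  rcases lt_or_eq_of_le (hpos x) with h | h
  · exact h
  · exfalso; apply hx
    apply Complex.ext
    · exact h.symm
    · simp [hreal x]

lemma reNN_zero (k : ℕ) (a : ℕ → ℂ) (hk : 1 ≤ k)
    (hreal : ∀ z : ℂ, (homPoly k a z).im = 0)
    (hpos : ∀ z : ℂ, 0 ≤ (homPoly k a z).re)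
    (c₁ : ℝ) (hc₁ : 0 < c₁)
    (hbound : ∀ z : ℂ, 0 < ‖z‖ → ‖z‖ < 1 → homPoly k a z ≠ 0 →
      -(c₁ / (‖z‖ ^ 2 * (Real.log (1 / ‖z‖)) ^ 2)) ≤
          -(wD (fun w : ℂ => wDbar
              (fun y : ℂ => ((Real.log ((homPoly k a y).re) : ℝ) : ℂ)) w) z).re ∧
        -(wD (fun w : ℂ => wDbar
              (fun y : ℂ => ((Real.log ((homPoly k a y).re) : ℝ) : ℂ)) w) z).re ≤
          c₁ / (‖z‖ ^ 2 * (Real.log (1 / ‖z‖)) ^ 2))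
    (w : ℂ) (hw : w ≠ 0) (hfw : homPoly k a w ≠ 0) : (NN k a w).re = 0 := by
  set f := homPoly k a with hf
  have hcw : 0 < (f w).re := fpos_of_ne k a hreal hpos w hfw
  set c := (f w).re with hc
  have habsw : 0 < ‖w‖ := by
    simpa [norm_pos_iff] using hw
  -- main estimate for each n ≥ 1
  have hX : ∀ n : ℕ, 1 ≤ n → |(NN k a w).re| / c^2 ≤ c₁ / ((‖w‖)^2 * (n:ℝ)^2) := by
    intro n hn
    set r : ℝ := Real.exp (-(n:ℝ)) with hr
    have hr0 : 0 < r := Real.exp_pos _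
    have hr1 : r < 1 := by
      rw [hr, Real.exp_lt_one_iff]
      have : (1:ℝ) ≤ n := by exact_mod_cast hn
      linarith
    set lam : ℝ := r / ‖w‖ with hlam
    have hlam0 : 0 < lam := div_pos hr0 habsw
    set z : ℂ := (lam:ℂ) * w with hz
    have habsz : ‖z‖ = r := by
      rw [hz, norm_mul, Complex.norm_real, Real.norm_eq_abs, abs_of_pos hlam0, hlam,
        div_mul_cancel₀ _ (ne_of_gt habsw)]
    have hfz : f z = (lam:ℂ)^k * f w := homPoly_smul k a lam w
    have hfz0 : f z ≠ 0 := by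
      rw [hfz]
      exact mul_ne_zero (pow_ne_zero _ (by exact_mod_cast ne_of_gt hlam0)) hfw
    have hbz := hbound z (by rw [habsz]; exact hr0) (by rw [habsz]; exact hr1) hfz0
    have hkey := key_formula k a hreal z (fpos_of_ne k a hreal hpos z hfz0)
    have hlog : Real.log (1 / ‖z‖) = n := by
      rw [habsz, hr, one_div, ← Real.exp_neg, neg_neg, Real.log_exp]
    rw [hkey] at hbz
    have hNNz : homPoly k a z * pfzzb k a z - pfz k a z * pfzb k a z = NN k a z := rfl
    have hfz' : homPoly k a z = f z := rfl
    rw [hNNz, hfz'] at hbz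
    have hQ : |((NN k a z / (f z)^2)).re| ≤ c₁ / (r^2 * (n:ℝ)^2) := by
      rw [← habsz, ← hlog]
      exact abs_le.mpr ⟨by linarith [hbz.1], by linarith [hbz.2]⟩
    -- compute NN z / f z ^ 2
    have hfw_eq : f w = (c:ℂ) := by
      apply Complex.ext
      · simp [hc]
      · simp [hreal w]
    have hsc : (lam^(2*k-2) / (lam^(2*k) * c^2)) * ((lam^k)^2 * c^2) = lam^(2*k-2) := by
      have hlampow : lam^(2*k) = lam^(2*k-2) * lam^2 := by
        rw [← pow_add]; congr 1; omega
      have hlk : (lam^k)^2 = lam^(2*k) := by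
        rw [← pow_mul]; congr 1; omega
      rw [hlk, hlampow]
      field_simp
    have hcast : ((lam:ℂ))^(2*k-2)
        = ((lam^(2*k-2) / (lam^(2*k) * c^2) : ℝ) : ℂ) * (((lam:ℂ))^k * (c:ℂ))^2 := by
      have := congrArg (fun x : ℝ => (x : ℂ)) hsc.symm
      push_cast at this
      calc ((lam:ℂ))^(2*k-2) = _ := this
      _ = ((lam^(2*k-2) / (lam^(2*k) * c^2) : ℝ) : ℂ) * (((lam:ℂ))^k * (c:ℂ))^2 := by
        push_cast
        ring
    have hcompute : NN k a z / (f z)^2 =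
        ((lam^(2*k-2) / (lam^(2*k) * c^2) : ℝ) : ℂ) * NN k a w := by
      rw [hz, NN_smul, hfz, hfw_eq]
      have hDne : (((lam:ℂ))^k * (c:ℂ))^2 ≠ 0 := by
        apply pow_ne_zero
        apply mul_ne_zero
        · exact pow_ne_zero _ (by exact_mod_cast ne_of_gt hlam0)
        · exact_mod_cast ne_of_gt hcw
      rw [div_eq_iff hDne]
      linear_combination (NN k a w) * hcast
    rw [hcompute] at hQ
    rw [Complex.re_ofReal_mul, abs_mul] at hQ
    have hfac : |lam^(2*k-2) / (lam^(2*k) * c^2)| = 1/(lam^2 * c^2) := by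
      have hlampow : lam^(2*k) = lam^(2*k-2) * lam^2 := by
        rw [← pow_add]; congr 1; omega
      rw [abs_of_pos (by positivity), hlampow]
      rw [div_eq_div_iff (by positivity) (by positivity)]
      ring
    rw [hfac] at hQ
    have hr2 : r^2 = lam^2 * (‖w‖)^2 := by
      rw [hlam]; field_simp
    rw [hr2] at hQ
    have h2 : 1/(lam^2*c^2) * |(NN k a w).re| = (|(NN k a w).re| / c^2) / lam^2 := by
      ring
    rw [h2] at hQ
    have h3 : c₁ / (lam^2 * (‖w‖)^2 * (n:ℝ)^2)
        = (c₁ / ((‖w‖)^2 * (n:ℝ)^2)) / lam^2 := by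
      ring
    rw [h3] at hQ
    exact (div_le_div_iff_of_pos_right (by positivity)).mp hQ
  -- conclude
  by_contra hne
  have hXpos : 0 < |(NN k a w).re| / c^2 := by
    apply div_pos _ (by positivity)
    exact abs_pos.mpr hne
  set X := |(NN k a w).re| / c^2 with hXdef
  obtain ⟨n, hn⟩ := exists_nat_gt (max 1 (c₁ / ((‖w‖)^2 * X)))
  have hn1r : (1:ℝ) ≤ n := (lt_of_le_of_lt (le_max_left _ _) hn).le
  have hn1 : 1 ≤ n := by exact_mod_cast hn1r
  have hbig : c₁ / ((‖w‖)^2 * X) < n := lt_of_le_of_lt (le_max_right _ _) hn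
  have hXn := hX n hn1
  have hnpos : (0:ℝ) < n := by linarith
  have hnn : (n:ℝ) ≤ (n:ℝ)^2 := by nlinarith
  have hc₁lt : c₁ < (‖w‖)^2 * X * n := by
    rw [div_lt_iff₀ (by positivity)] at hbig
    linarith [hbig]
  have hmono : (‖w‖)^2 * X * (n:ℝ) ≤ (‖w‖)^2 * X * (n:ℝ)^2 :=
    mul_le_mul_of_nonneg_left hnn (by positivity)
  have hlt : c₁ / ((‖w‖)^2 * (n:ℝ)^2) < X := by
    rw [div_lt_iff₀ (by positivity)]
    nlinarith
  linarith

lemma conj_homPoly (k : ℕ) (a : ℕ → ℂ) (z : ℂ) :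
    starRingEnd ℂ (homPoly k a z)
      = ∑ m ∈ range (k+1), starRingEnd ℂ (a (k-m)) * z^m * (starRingEnd ℂ z)^(k-m) := by
  rw [homPoly, map_sum]
  rw [← Finset.sum_range_reflect (fun m => starRingEnd ℂ (a (k-m)) * z^m * (starRingEnd ℂ z)^(k-m)) (k+1)]
  apply Finset.sum_congr rfl
  intro s hs
  have hsk : s ≤ k := by have := Finset.mem_range.mp hs; omega
  rw [map_mul, map_mul, map_pow, map_pow, Complex.conj_conj]
  rw [show k + 1 - 1 - s = k - s from by omega, show k - (k - s) = s from by omega]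
  ring

lemma hsym_lemma (k : ℕ) (a : ℕ → ℂ) (hreal : ∀ z : ℂ, (homPoly k a z).im = 0) :
    ∀ s, s ≤ k → a s = starRingEnd ℂ (a (k-s)) := by
  have key := coeff_vanish k (fun s => a s - starRingEnd ℂ (a (k-s))) 1 one_ne_zero 1
    one_pos le_rfl ?_
  · intro s hs
    have := key s (Finset.mem_range.mpr (by omega))
    linear_combination this
  · intro θ hθ
    set Z := (1:ℂ) * Complex.exp ((θ:ℂ) * Complex.I) with hZ
    have : ∑ m ∈ range (k+1), (a m - starRingEnd ℂ (a (k-m))) * Z^m * (starRingEnd ℂ Z)^(k-m)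
        = homPoly k a Z - starRingEnd ℂ (homPoly k a Z) := by
      rw [conj_homPoly, homPoly, ← Finset.sum_sub_distrib]
      apply Finset.sum_congr rfl
      intro s _
      ring
    rw [this, Complex.sub_conj, hreal Z]
    simp

noncomputable def CC (k : ℕ) (a : ℕ → ℂ) (m : ℕ) : ℂ :=
  ∑ p ∈ (range (k+1) ×ˢ range (k+1)).filter (fun p => p.1 + p.2 = m),
    a p.1 * a p.2 * ((p.2:ℂ) - (p.1:ℂ))^2

lemma conjDD (k : ℕ) (a : ℕ → ℂ) (hreal : ∀ z : ℂ, (homPoly k a z).im = 0)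
    (m : ℕ) (hm : m ≤ 2*k) :
    starRingEnd ℂ (DD k a (2*k - m))
      = ∑ p ∈ (range (k+1) ×ˢ range (k+1)).filter (fun p => p.1 + p.2 = m),
          a p.1 * a p.2 * (p.2:ℂ) * ((p.1:ℂ) - (p.2:ℂ)) := by
  have hsym := hsym_lemma k a hreal
  rw [DD, map_sum]
  apply Finset.sum_nbij' (i := fun p : ℕ × ℕ => (k - p.1, k - p.2))
    (j := fun p : ℕ × ℕ => (k - p.1, k - p.2))
  · intro p hp
    rw [Finset.mem_filter, Finset.mem_product, Finset.mem_range, Finset.mem_range] at hp ⊢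
    rcases hp with ⟨⟨h1, h2⟩, h3⟩
    refine ⟨⟨by omega, by omega⟩, by omega⟩
  · intro p hp
    rw [Finset.mem_filter, Finset.mem_product, Finset.mem_range, Finset.mem_range] at hp ⊢
    rcases hp with ⟨⟨h1, h2⟩, h3⟩
    refine ⟨⟨by omega, by omega⟩, by omega⟩
  · intro p hp
    rw [Finset.mem_filter, Finset.mem_product, Finset.mem_range, Finset.mem_range] at hp
    rcases hp with ⟨⟨h1, h2⟩, h3⟩
    ext <;> simp <;> omega
  · intro p hp
    rw [Finset.mem_filter, Finset.mem_product, Finset.mem_range, Finset.mem_range] at hp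
    rcases hp with ⟨⟨h1, h2⟩, h3⟩
    ext <;> simp <;> omega
  · intro p hp
    rw [Finset.mem_filter, Finset.mem_product, Finset.mem_range, Finset.mem_range] at hp
    rcases hp with ⟨⟨h1, h2⟩, h3⟩
    have hp1 : p.1 ≤ k := by omega
    have hp2 : p.2 ≤ k := by omega
    rw [map_mul, map_mul, map_mul, map_sub]
    have e1 : starRingEnd ℂ (a p.1) = a (k - p.1) := by
      rw [hsym (k - p.1) (by omega), show k - (k - p.1) = p.1 from by omega]
    have e2 : starRingEnd ℂ (a p.2) = a (k - p.2) := by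
      rw [hsym (k - p.2) (by omega), show k - (k - p.2) = p.2 from by omega]
    rw [e1, e2]
    simp only [Complex.conj_natCast]
    have e3 : ((k - p.2 : ℕ) : ℂ) = (k:ℂ) - (p.2:ℂ) := by
      push_cast [Nat.cast_sub hp2]; ring
    have e4 : (((k:ℕ) - p.1 : ℕ) : ℂ) - (((k:ℕ) - p.2 : ℕ) : ℂ) = (p.2:ℂ) - (p.1:ℂ) := by
      push_cast [Nat.cast_sub hp1, Nat.cast_sub hp2]; ring
    rw [e3]
    have e5 : ((p.2:ℂ) - (p.1:ℂ)) = -(((p.1:ℂ)) - (p.2:ℂ)) := by ring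
    -- target: a (k-p.1) * a (k-p.2) * ((k:ℂ)-p.2) * ((p.2:ℂ) - p.1)
    --       = a (k-p.1) * a (k-p.2) * ((k-p.2 : ℕ):ℂ) * (((k-p.1:ℕ):ℂ) - ((k-p.2:ℕ):ℂ)) form
    push_cast [Nat.cast_sub hp1, Nat.cast_sub hp2]
    ring

lemma CC_zero_of (k : ℕ) (a : ℕ → ℂ) (hreal : ∀ z : ℂ, (homPoly k a z).im = 0)
    (m : ℕ) (hm : m ≤ 2*k)
    (hDD : DD k a m + starRingEnd ℂ (DD k a (2*k - m)) = 0) : CC k a m = 0 := by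
  set F := (range (k+1) ×ˢ range (k+1)).filter (fun p : ℕ × ℕ => p.1 + p.2 = m) with hF
  have h1 : ∑ p ∈ F, (a p.1 * a p.2 * ((p.2:ℂ) - p.1) * ((k:ℂ) - 2*p.2)) = 0 := by
    rw [conjDD k a hreal m hm, DD, ← Finset.sum_add_distrib] at hDD
    rw [← hDD]
    apply Finset.sum_congr rfl
    intro p hp
    rw [Finset.mem_filter, Finset.mem_product, Finset.mem_range, Finset.mem_range] at hp
    have hp2 : p.2 ≤ k := by omega
    push_cast [Nat.cast_sub hp2]
    ring
  have h2 : ∑ p ∈ F, (a p.1 * a p.2 * ((p.1:ℂ) - p.2) * ((k:ℂ) - 2*p.1)) = 0 := by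
    rw [← h1]
    apply Finset.sum_nbij' (i := Prod.swap) (j := Prod.swap)
    · intro p hp
      rw [hF, Finset.mem_filter, Finset.mem_product, Finset.mem_range, Finset.mem_range] at hp ⊢
      simp only [Prod.fst_swap, Prod.snd_swap]
      exact ⟨⟨hp.1.2, hp.1.1⟩, by omega⟩
    · intro p hp
      rw [hF, Finset.mem_filter, Finset.mem_product, Finset.mem_range, Finset.mem_range] at hp ⊢
      simp only [Prod.fst_swap, Prod.snd_swap]
      exact ⟨⟨hp.1.2, hp.1.1⟩, by omega⟩
    · intro p _; simp
    · intro p _; simp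
    · intro p _
      simp only [Prod.fst_swap, Prod.snd_swap]
      ring
  have h3 : (-2:ℂ) * CC k a m = 0 := by
    have : (-2:ℂ) * CC k a m = ∑ p ∈ F,
        ((a p.1 * a p.2 * ((p.2:ℂ) - p.1) * ((k:ℂ) - 2*p.2))
          + (a p.1 * a p.2 * ((p.1:ℂ) - p.2) * ((k:ℂ) - 2*p.1))) := by
      rw [CC, Finset.mul_sum]
      apply Finset.sum_congr rfl
      intro p _
      ring
    rw [this, Finset.sum_add_distrib, h1, h2, add_zero]
  have := mul_eq_zero.mp h3
  rcases this with h | h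
  · norm_num at h
  · exact h

lemma sum_b_eq (k : ℕ) (a : ℕ → ℂ) (hk : 1 ≤ k) (z : ℂ) :
    ∑ j ∈ range (2*k-2+1), (DD k a (j+1) + starRingEnd ℂ (DD k a (2*k-(j+1))))
      * z^j * (starRingEnd ℂ z)^(2*k-2-j)
    = NN k a z + starRingEnd ℂ (NN k a z) := by
  have hconj : starRingEnd ℂ (NN k a z)
      = ∑ m ∈ range (2*k+1), starRingEnd ℂ (DD k a (2*k-m)) * z^(m-1) * (starRingEnd ℂ z)^(2*k-m-1) := by
    rw [NN_eq, map_sum]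
    rw [← Finset.sum_range_reflect
      (fun m => starRingEnd ℂ (DD k a (2*k-m)) * z^(m-1) * (starRingEnd ℂ z)^(2*k-m-1)) (2*k+1)]
    apply Finset.sum_congr rfl
    intro m hm
    have hm' : m ≤ 2*k := by have := Finset.mem_range.mp hm; omega
    rw [map_mul, map_mul, map_pow, map_pow, Complex.conj_conj]
    rw [show 2*k + 1 - 1 - m = 2*k - m from by omega]
    rw [show 2*k - (2*k - m) = m from by omega]
    ring
  have hfull : NN k a z + starRingEnd ℂ (NN k a z)
      = ∑ m ∈ range (2*k+1), (DD k a m + starRingEnd ℂ (DD k a (2*k-m)))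
          * z^(m-1) * (starRingEnd ℂ z)^(2*k-m-1) := by
    rw [hconj, NN_eq, ← Finset.sum_add_distrib]
    apply Finset.sum_congr rfl
    intro m _
    ring
  rw [hfull]
  symm
  rw [show range (2*k-2+1) = range (2*k-1) from by congr 1; omega] at *
  rw [Finset.sum_range_succ' _ (2*k)]
  rw [show range (2*k) = range ((2*k-1)+1) from by congr 1; omega, Finset.sum_range_succ]
  have hzero0 : (DD k a 0 + starRingEnd ℂ (DD k a (2*k-0)))
      * z^(0-1) * (starRingEnd ℂ z)^(2*k-0-1) = 0 := by
    rw [DD_zero, Nat.sub_zero, DD_top]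
    simp
  have htop0 : (DD k a ((2*k-1)+1) + starRingEnd ℂ (DD k a (2*k-((2*k-1)+1))))
      * z^((2*k-1)+1-1) * (starRingEnd ℂ z)^(2*k-((2*k-1)+1)-1) = 0 := by
    rw [show (2*k-1)+1 = 2*k from by omega, Nat.sub_self, DD_zero, DD_top]
    simp
  rw [hzero0, htop0, add_zero, add_zero]
  apply Finset.sum_congr rfl
  intro j hj
  have hj' : j < 2*k-1 := Finset.mem_range.mp hj
  rw [show 2*k - (j+1) - 1 = 2*k - 2 - j from by omega, Nat.add_sub_cancel]


theorem stmt_14 (k : ℕ) (a : ℕ → ℂ)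
    (hreal : ∀ z : ℂ, (homPoly k a z).im = 0)
    (hpos : ∀ z : ℂ, 0 ≤ (homPoly k a z).re)
    (hne : ∃ z : ℂ, homPoly k a z ≠ 0)
    (c₁ : ℝ) (hc₁ : 0 < c₁)
    (hbound : ∀ z : ℂ, 0 < ‖z‖ → ‖z‖ < 1 → homPoly k a z ≠ 0 →
      -(c₁ / (‖z‖ ^ 2 * (Real.log (1 / ‖z‖)) ^ 2)) ≤
          -(wD (fun w : ℂ => wDbar
              (fun y : ℂ => ((Real.log ((homPoly k a y).re) : ℝ) : ℂ)) w) z).re ∧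
        -(wD (fun w : ℂ => wDbar
              (fun y : ℂ => ((Real.log ((homPoly k a y).re) : ℝ) : ℂ)) w) z).re ≤
          c₁ / (‖z‖ ^ 2 * (Real.log (1 / ‖z‖)) ^ 2)) :
    ∃ l : ℕ, k = 2 * l ∧ ∃ c : ℝ, 0 < c ∧
      ∀ z : ℂ, homPoly k a z = ((c * ‖z‖ ^ k : ℝ) : ℂ) := by
  by_cases hk0 : k = 0
  · subst hk0
    have h0 : ∀ z : ℂ, homPoly 0 a z = a 0 := fun z => by simp [homPoly]
    obtain ⟨z₁, hz₁⟩ := hne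
    have ha0 : a 0 ≠ 0 := by rw [h0 z₁] at hz₁; exact hz₁
    have hre0 : 0 ≤ (a 0).re := by have := hpos 0; rwa [h0 0] at this
    have him0 : (a 0).im = 0 := by have := hreal 0; rwa [h0 0] at this
    have hrepos : 0 < (a 0).re := by
      rcases lt_or_eq_of_le hre0 with h | h
      · exact h
      · exfalso; exact ha0 (Complex.ext h.symm him0)
    refine ⟨0, rfl, (a 0).re, hrepos, ?_⟩
    intro z
    rw [h0 z]
    simp
    exact Complex.ext rfl him0
  · have hk : 1 ≤ k := by omega
    obtain ⟨z₁, hz₁⟩ := hne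
    have hz₁0 : z₁ ≠ 0 := by
      intro h
      apply hz₁
      rw [h, homPoly]
      apply Finset.sum_eq_zero
      intro s hs
      by_cases hs0 : s = 0
      · subst hs0; simp [zero_pow hk0]
      · simp [zero_pow hs0]
    -- arc where f is nonzero
    have hcont : ContinuousAt (fun θ : ℝ => homPoly k a (z₁ * Complex.exp ((θ:ℂ) * Complex.I))) 0 := by
      apply Continuous.continuousAt
      exact (continuous_homPoly k a).comp
        (continuous_const.mul ((Complex.continuous_exp).comp
          ((Complex.continuous_ofReal).mul continuous_const)))
    have hne0 : (fun θ : ℝ => homPoly k a (z₁ * Complex.exp ((θ:ℂ) * Complex.I))) 0 ≠ 0 := by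
      simpa using hz₁
    obtain ⟨ε, hε, hball⟩ := Metric.eventually_nhds_iff.mp (hcont.eventually_ne hne0)
    set δ := min ε 1 with hδdef
    have hδ0 : 0 < δ := lt_min hε one_pos
    have hδ1 : δ ≤ 1 := min_le_right _ _
    have hbj := coeff_vanish (2*k-2)
      (fun j => DD k a (j+1) + starRingEnd ℂ (DD k a (2*k-(j+1)))) z₁ hz₁0 δ hδ0 hδ1 ?_
    swap
    · intro θ hθ
      set Z := z₁ * Complex.exp ((θ:ℂ) * Complex.I) with hZ
      have hZ0 : Z ≠ 0 := mul_ne_zero hz₁0 (Complex.exp_ne_zero _)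
      have hfZ : homPoly k a Z ≠ 0 := by
        apply hball
        rw [Real.dist_eq, sub_zero]
        rcases hθ with ⟨h1, h2⟩
        rw [abs_lt]
        constructor
        · have := min_le_left ε 1; linarith [h1]
        · have := min_le_left ε 1; linarith [h2]
      rw [sum_b_eq k a hk Z, Complex.add_conj,
        reNN_zero k a hk hreal hpos c₁ hc₁ hbound Z hZ0 hfZ]
      simp
    have hCC : ∀ m, 1 ≤ m → m ≤ 2*k-1 → CC k a m = 0 := by
      intro m h1 h2
      apply CC_zero_of k a hreal m (by omega)
      have h3 : DD k a ((m-1)+1) + starRingEnd ℂ (DD k a (2*k-((m-1)+1))) = 0 :=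
        hbj (m-1) (Finset.mem_range.mpr (by omega))
      rw [show m-1+1 = m from by omega] at h3
      exact h3
    -- support of a
    classical
    set S := (range (k+1)).filter (fun s => a s ≠ 0) with hS
    have hSne : S.Nonempty := by
      by_contra h
      apply hz₁
      rw [homPoly]
      apply Finset.sum_eq_zero
      intro s hs
      have : a s = 0 := by
        by_contra ha
        exact h ⟨s, Finset.mem_filter.mpr ⟨hs, ha⟩⟩
      simp [this]
    set q := S.min' hSne with hqdef
    have hqS : q ∈ S := S.min'_mem hSne
    have hqk : q ≤ k := by
      have := (Finset.mem_filter.mp hqS).1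
      have := Finset.mem_range.mp this
      omega
    have haq : a q ≠ 0 := (Finset.mem_filter.mp hqS).2
    have hsingle : ¬(S.erase q).Nonempty := by
      intro h2
      set q' := (S.erase q).min' h2 with hq'def
      have hq'mem : q' ∈ S.erase q := (S.erase q).min'_mem h2
      have hqq' : q < q' := Finset.min'_lt_of_mem_erase_min' S hSne hq'mem
      have hq'S : q' ∈ S := Finset.mem_of_mem_erase hq'mem
      have hq'k : q' ≤ k := by
        have := Finset.mem_range.mp (Finset.mem_filter.mp hq'S).1; omega
      have haq' : a q' ≠ 0 := (Finset.mem_filter.mp hq'S).2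
      have hm := hCC (q+q') (by omega) (by omega)
      rw [CC] at hm
      rw [Finset.sum_eq_add (⟨q, q'⟩ : ℕ × ℕ) (⟨q', q⟩ : ℕ × ℕ)
        (by intro h; exact absurd (congrArg Prod.fst h) (by simp; omega))
        ?_ ?_ ?_] at hm
      · have h2q : (2:ℂ) * (a q * a q' * (((q':ℕ):ℂ) - ((q:ℕ):ℂ))^2) = 0 := by
          linear_combination hm
        have hqne : (((q':ℕ):ℂ) - ((q:ℕ):ℂ)) ≠ 0 := by
          rw [sub_ne_zero]
          exact_mod_cast (by omega : q' ≠ q)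
        have := mul_ne_zero (mul_ne_zero (mul_ne_zero (two_ne_zero) haq) haq')
          (pow_ne_zero 2 hqne)
        apply this
        linear_combination h2q
      · intro c hc hcne
        rw [Finset.mem_filter, Finset.mem_product, Finset.mem_range, Finset.mem_range] at hc
        rcases hc with ⟨⟨hc1, hc2⟩, hc3⟩
        by_cases ha1 : a c.1 = 0
        · simp [ha1]
        by_cases ha2 : a c.2 = 0
        · simp [ha2]
        exfalso
        have hc1S : c.1 ∈ S := Finset.mem_filter.mpr ⟨Finset.mem_range.mpr hc1, ha1⟩
        have hc2S : c.2 ∈ S := Finset.mem_filter.mpr ⟨Finset.mem_range.mpr hc2, ha2⟩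
        have hq1 : q ≤ c.1 := S.min'_le _ hc1S
        have hq2 : q ≤ c.2 := S.min'_le _ hc2S
        by_cases he1 : c.1 = q
        · have : c.2 = q' := by omega
          exact hcne.1 (Prod.ext he1 this)
        · have hc1e : c.1 ∈ S.erase q := Finset.mem_erase.mpr ⟨he1, hc1S⟩
          have : q' ≤ c.1 := (S.erase q).min'_le _ hc1e
          have h21 : c.2 = q := by omega
          have h22 : c.1 = q' := by omega
          exact hcne.2 (Prod.ext h22 h21)
      · intro hnot
        exfalso
        apply hnot
        rw [Finset.mem_filter, Finset.mem_product]
        exact ⟨⟨Finset.mem_range.mpr (by omega), Finset.mem_range.mpr (by omega)⟩, rfl⟩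
      · intro hnot
        exfalso
        apply hnot
        rw [Finset.mem_filter, Finset.mem_product]
        exact ⟨⟨Finset.mem_range.mpr (by omega), Finset.mem_range.mpr (by omega)⟩, by simp; omega⟩
    -- so a s = 0 for s ≠ q
    have haz : ∀ s, s ∈ range (k+1) → s ≠ q → a s = 0 := by
      intro s hs hsq
      by_contra ha
      exact hsingle ⟨s, Finset.mem_erase.mpr ⟨hsq, Finset.mem_filter.mpr ⟨hs, ha⟩⟩⟩
    have hsym := hsym_lemma k a hreal
    have hk2q : k = 2*q := by
      by_contra hne2
      have hkq : k - q ≠ q := by omega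
      have h1 := hsym (k-q) (by omega)
      rw [show k-(k-q) = q from by omega] at h1
      have h2' : a (k-q) = 0 := haz (k-q) (Finset.mem_range.mpr (by omega)) hkq
      rw [h2'] at h1
      apply haq
      have := congrArg (starRingEnd ℂ) h1.symm
      simpa using this
    have haqim : (a q).im = 0 := by
      have h1 := hsym q hqk
      rw [show k - q = q from by omega] at h1
      have : starRingEnd ℂ (a q) = a q := h1.symm
      exact Complex.conj_eq_iff_im.mp this
    have haqreal : a q = (((a q).re : ℝ) : ℂ) := Complex.ext rfl (by simp [haqim])
    have hsingleval : ∀ z : ℂ, homPoly k a z = a q * z^q * (starRingEnd ℂ z)^(k-q) := by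
      intro z
      rw [homPoly]
      rw [Finset.sum_eq_single q]
      · intro s hs hsq
        simp [haz s hs hsq]
      · intro hnot
        exact absurd (Finset.mem_range.mpr (by omega)) hnot
    have hrepos : 0 < (a q).re := by
      have h1 := hpos 1
      have he : homPoly k a 1 = a q := by
        rw [hsingleval 1]; simp
      rw [he] at h1
      rcases lt_or_eq_of_le h1 with h | h
      · exact h
      · exfalso; exact haq (Complex.ext h.symm haqim)
    refine ⟨q, hk2q, (a q).re, hrepos, ?_⟩
    intro z
    rw [hsingleval z, haqreal, show k - q = q from by omega]
    have hzz : z * starRingEnd ℂ z = ((‖z‖ ^ 2 : ℝ) : ℂ) := by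
      rw [Complex.mul_conj]
      norm_cast
      exact (Complex.sq_norm z).symm
    calc (((a q).re : ℝ) : ℂ) * z^q * (starRingEnd ℂ z)^q
        = (((a q).re : ℝ) : ℂ) * (z * starRingEnd ℂ z)^q := by rw [mul_pow]; ring
    _ = (((a q).re : ℝ) : ℂ) * (((‖z‖ ^ 2 : ℝ) : ℂ))^q := by rw [hzz]
    _ = (((a q).re * (‖z‖ ^ 2)^q : ℝ) : ℂ) := by push_cast; ring
    _ = (((a q).re * ‖z‖ ^ k : ℝ) : ℂ) := by
          rw [← pow_mul, show 2*q = k from hk2q.symm]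
end
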